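/- arXiv:2604.06538 — 8 statements merged into one kernel-verified Lean document; each statement's English description precedes it below -/
import Mathlib

section
/- Let Γ be a strongly regular graph on n² vertices with valency k, having a restricted eigenvalue a such that k = -a(n-1), where n is a nonzero integer (possibly negative). Then Γ has restricted eigenvalues n-t and -t with t = k/(n-1); in particular if n > 0 then Γ is of Latin square type and if n < 0 then Γ is of negative Latin square type. -/
open Matrix

/-- `A` is the adjacency matrix of a strongly regular graph with valency `k`,
`λ`-parameter `l` and `μ`-parameter `m`. -/
def IsSRGMatrix {V : Type*} [Fintype V] [DecidableEq V] (A : Matrix V V ℝ)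
    (k l m : ℝ) : Prop :=
  A.IsSymm ∧ (∀ x y, A x y = 0 ∨ A x y = 1) ∧ (∀ x, A x x = 0) ∧
    (A *ᵥ (fun _ => (1 : ℝ)) = fun _ => k) ∧
    A * A = k • (1 : Matrix V V ℝ) + l • A +
      m • ((Matrix.of fun _ _ => (1 : ℝ)) - 1 - A)

/-- `b` is an eigenvalue of `A`. -/
def HasEigenvalue' {V : Type*} [Fintype V] (A : Matrix V V ℝ) (b : ℝ) : Prop :=
  ∃ x : V → ℝ, x ≠ 0 ∧ A *ᵥ x = b • x

/-- `A` (with valency `k`) is a strongly regular graph of Latin square type. -/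
def IsLatinSquareType {V : Type*} [Fintype V] [DecidableEq V]
    (A : Matrix V V ℝ) (k : ℝ) : Prop :=
  ∃ n t : ℤ, 0 < n ∧ 0 < t ∧ (Fintype.card V : ℤ) = n ^ 2 ∧
    k = (t : ℝ) * ((n : ℝ) - 1) ∧
    ∀ b : ℝ, HasEigenvalue' A b → b ≠ k → b = (n : ℝ) - (t : ℝ) ∨ b = -(t : ℝ)

/-- `A` (with valency `k`) is a strongly regular graph of negative Latin square type. -/
def IsNegLatinSquareType {V : Type*} [Fintype V] [DecidableEq V]
    (A : Matrix V V ℝ) (k : ℝ) : Prop :=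
  ∃ n t : ℤ, n < 0 ∧ t < 0 ∧ (Fintype.card V : ℤ) = n ^ 2 ∧
    k = (t : ℝ) * ((n : ℝ) - 1) ∧
    ∀ b : ℝ, HasEigenvalue' A b → b ≠ k → b = (n : ℝ) - (t : ℝ) ∨ b = -(t : ℝ)

set_option maxHeartbeats 2000000 in
/-- A strongly regular graph on `n²` vertices with valency `k` and a restricted
eigenvalue `a` such that `k = -a(n-1)` has restricted eigenvalues `n - t` and `-t`
where `t = k/(n-1) = -a`; in particular it is of Latin square type if `n > 0`
and of negative Latin square type if `n < 0`. -/
theorem stmt_0 {V : Type*} [Fintype V] [DecidableEq V] (n : ℤ) (hn : n ≠ 0)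
    (hcard : (Fintype.card V : ℤ) = n ^ 2)
    (A : Matrix V V ℝ) (k l m a : ℝ)
    (hsrg : IsSRGMatrix A k l m)
    (ha : HasEigenvalue' A a) (hak : a ≠ k)
    (hk : k = -a * ((n : ℝ) - 1)) :
    (∃ t : ℤ, (t : ℝ) = -a ∧ k = (t : ℝ) * ((n : ℝ) - 1) ∧
      ∀ b : ℝ, HasEigenvalue' A b → b ≠ k →
        b = (n : ℝ) - (t : ℝ) ∨ b = -(t : ℝ)) ∧
    (0 < n → IsLatinSquareType A k) ∧
    (n < 0 → IsNegLatinSquareType A k) := by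
  classical
  obtain ⟨hsym, h01, hdiag, hrow, heq⟩ := hsrg
  have hcpos : 0 < Fintype.card V := by
    have : (0:ℤ) < Fintype.card V := by rw [hcard]; positivity
    exact_mod_cast this
  have : Nonempty V := Fintype.card_pos_iff.mp hcpos
  obtain ⟨v0⟩ := this
  -- card ≠ 1
  have hcard1 : Fintype.card V ≠ 1 := by
    intro h1
    have hsub : Subsingleton V := Fintype.card_le_one_iff_subsingleton.mp h1.le
    have hA0 : A = 0 := by
      ext i j
      have : i = j := Subsingleton.elim i j
      subst this; exact hdiag i
    have hk0 : k = 0 := by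
      have := congrFun hrow v0
      rw [hA0] at this
      simpa using this.symm
    obtain ⟨x, hx0, hx⟩ := ha
    have ha0 : a = 0 := by
      rw [hA0] at hx
      obtain ⟨i, hi⟩ := Function.ne_iff.mp hx0
      have := congrFun hx i
      simp only [Matrix.zero_mulVec, Pi.zero_apply, Pi.smul_apply, smul_eq_mul] at this
      rcases mul_eq_zero.mp this.symm with h | h
      · exact h
      · exact absurd h hi
    exact hak (by rw [ha0, hk0])
  have hn1 : n ≠ 1 := by intro h; rw [h] at hcard; simpa using hcard1 (by exact_mod_cast hcard)
  have hnm1 : n ≠ -1 := by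
    intro h; rw [h] at hcard; simp at hcard; exact hcard1 (by exact_mod_cast hcard)
  have hN0 : ((n:ℝ)) ≠ 0 := Int.cast_ne_zero.mpr hn
  have hN1 : ((n:ℝ)) - 1 ≠ 0 := by
    intro h
    exact hn1 (by exact_mod_cast sub_eq_zero.mp h)
  have ha0 : a ≠ 0 := by
    intro h; apply hak; rw [h] at hk ⊢; rw [hk]; ring
  have hk0 : k ≠ 0 := by
    rw [hk]; intro h
    rcases mul_eq_zero.mp h with h | h
    · exact ha0 (by linarith [neg_eq_zero.mp h])
    · exact hN1 h
  have hcardR : ((Fintype.card V : ℝ)) = (n:ℝ)^2 := by exact_mod_cast hcard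
  have key : ∀ (x : V → ℝ) (b : ℝ), A *ᵥ x = b • x →
      ∀ i, b^2 * x i = k * x i + l * (b * x i) + m * ((∑ j, x j) - x i - b * x i) := by
    intro x b hx i
    have h2 : (A * A) *ᵥ x = (b^2) • x := by
      rw [← Matrix.mulVec_mulVec, hx, Matrix.mulVec_smul, hx, smul_smul, sq]
    rw [heq] at h2
    have hJ : (Matrix.of fun _ _ => (1:ℝ) : Matrix V V ℝ) *ᵥ x = fun _ => ∑ j, x j := by
      ext i'; simp [Matrix.mulVec, dotProduct]
    have h3 := congrFun h2 i
    simp only [Matrix.add_mulVec, Matrix.smul_mulVec, Matrix.sub_mulVec,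
      Matrix.one_mulVec, hx, hJ, Pi.add_apply, Pi.smul_apply, Pi.sub_apply,
      smul_eq_mul] at h3
    rw [h3]
  -- counting relation
  have hones : A *ᵥ (fun _ => (1:ℝ)) = k • (fun _ => (1:ℝ)) := by
    rw [hrow]; ext i; simp
  have hcnt : k^2 = k + l * k + m * ((n:ℝ)^2 - 1 - k) := by
    have := key (fun _ => (1:ℝ)) k hones v0
    simpa [hcardR] using this
  -- quadratic for restricted eigenvalues
  have hquadb : ∀ b : ℝ, (∃ x : V → ℝ, x ≠ 0 ∧ A *ᵥ x = b • x) → b ≠ k →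
      b^2 = k + l * b + m * (0 - 1 - b) := by
    intro b hb hbk
    obtain ⟨x, hx0, hx⟩ := hb
    have hsum : ∑ j, x j = 0 := by
      have h1 : ∑ j, (A *ᵥ x) j = b * ∑ j, x j := by
        rw [hx]; simp [Finset.mul_sum]
      have h2 : ∑ j, (A *ᵥ x) j = k * ∑ j, x j := by
        simp only [Matrix.mulVec, dotProduct]
        rw [Finset.sum_comm]
        rw [Finset.mul_sum]
        refine Finset.sum_congr rfl fun i _ => ?_
        have hr : ∑ j, A i j = k := by
          have := congrFun hrow i
          simpa [Matrix.mulVec, dotProduct] using this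
        calc ∑ j, A j i * x i = (∑ j, A j i) * x i := by rw [Finset.sum_mul]
          _ = k * x i := by
              congr 1
              rw [← hr]
              exact Finset.sum_congr rfl fun j _ => hsym.apply i j
      have : (k - b) * ∑ j, x j = 0 := by rw [sub_mul]; rw [← h1, ← h2]; ring
      rcases mul_eq_zero.mp this with h | h
      · exact absurd (sub_eq_zero.mp h).symm hbk
      · exact h
    obtain ⟨i, hi⟩ := Function.ne_iff.mp hx0
    have := key x b hx i
    rw [hsum] at this
    have h4 : (b^2) * x i = (k + l * b + m * (0 - 1 - b)) * x i := by
      rw [this]; ring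
    exact mul_right_cancel₀ hi h4
  have haq : a^2 = k + l * a + m * (0 - 1 - a) := hquadb a ha hak
  -- the second root
  have hs : l - m = (n:ℝ) + 2 * a := by
    have hD : k * (n:ℝ) ≠ 0 := mul_ne_zero hk0 hN0
    apply mul_left_cancel₀ hD
    linear_combination hcnt + ((n:ℝ)^2 - 1) * haq + (-k + (1 + (n:ℝ))*(l - m) - a - a*(n:ℝ)) * hk
  have hb2 : ∀ b : ℝ, (∃ x : V → ℝ, x ≠ 0 ∧ A *ᵥ x = b • x) → b ≠ k →
      b = a ∨ b = (n:ℝ) + a := by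
    intro b hb hbk
    have hq := hquadb b hb hbk
    have hfac : (b - a) * (b - ((n:ℝ) + a)) = 0 := by
      linear_combination hq - haq + (b - a) * hs
    rcases mul_eq_zero.mp hfac with h | h
    · left; linarith [sub_eq_zero.mp h]
    · right; linarith [sub_eq_zero.mp h]
  have hH : A.IsHermitian := hsym
  set μ := hH.eigenvalues with hμ
  have hevs : ∀ i, ∃ x : V → ℝ, x ≠ 0 ∧ A *ᵥ x = μ i • x := by
    intro i
    refine ⟨(WithLp.equiv 2 _) (hH.eigenvectorBasis i), ?_, hH.mulVec_eigenvectorBasis i⟩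
    have h0 := hH.eigenvectorBasis.orthonormal.ne_zero i
    intro hc
    apply h0
    apply (WithLp.equiv 2 _).injective
    simpa using hc
  set U : Matrix V V ℝ := (hH.eigenvectorUnitary : Matrix V V ℝ) with hU
  have hUU : star U * U = 1 := Unitary.star_mul_self_of_mem hH.eigenvectorUnitary.2
  have hUU' : U * star U = 1 := Unitary.mul_star_self_of_mem hH.eigenvectorUnitary.2
  have hdiagU : star U * A * U = Matrix.diagonal μ := by
    have := hH.conjStarAlgAut_star_eigenvectorUnitary
    simpa using this
  have htraceA : A.trace = ∑ i, μ i := by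
    have h1 : (star U * A * U).trace = A.trace := by
      rw [Matrix.trace_mul_cycle, hUU', Matrix.one_mul]
    rw [hdiagU] at h1
    rw [← h1, Matrix.trace_diagonal]
  have htraceA2 : (A * A).trace = ∑ i, (μ i)^2 := by
    have h2 : star U * (A * A) * U = Matrix.diagonal μ * Matrix.diagonal μ := by
      rw [← hdiagU]
      have : star U * (A * A) * U = (star U * A * U) * (star U * A * U) := by
        rw [show (star U * A * U) * (star U * A * U)
            = star U * A * (U * star U) * A * U by simp only [Matrix.mul_assoc], hUU']
        simp only [Matrix.mul_one, Matrix.mul_assoc, Matrix.one_mul]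
      rw [this]
    have h1 : (star U * (A * A) * U).trace = (A * A).trace := by
      rw [Matrix.trace_mul_cycle, hUU', Matrix.one_mul]
    rw [h2] at h1
    rw [← h1, Matrix.diagonal_mul_diagonal, Matrix.trace_diagonal]
    exact Finset.sum_congr rfl fun i _ => (sq (μ i)).symm
  have htr0 : ∑ i, μ i = 0 := by
    rw [← htraceA, Matrix.trace]
    simp only [Matrix.diag_apply]
    exact Finset.sum_eq_zero fun i _ => hdiag i
  have htr2 : ∑ i, (μ i)^2 = (Fintype.card V : ℝ) * k := by
    rw [← htraceA2, heq]
    have hJtr : ((Matrix.of fun _ _ => (1:ℝ)) : Matrix V V ℝ).trace = (Fintype.card V : ℝ) := by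
      simp [Matrix.trace, Matrix.diag]
    rw [Matrix.trace_add, Matrix.trace_add, Matrix.trace_smul, Matrix.trace_smul,
      Matrix.trace_smul, Matrix.trace_sub, Matrix.trace_sub, hJtr, Matrix.trace_one]
    have : A.trace = 0 := by rw [htraceA, htr0]
    rw [this]
    simp [Matrix.trace_one]
    ring
  have hqrat : ∃ q : ℚ, (q : ℝ) = -a := by
    by_cases hT1 : a = -1
    · exact ⟨1, by rw [hT1]; norm_num⟩
    · 
      have hks : ((n:ℝ) + a) ≠ k := by
        intro h
        apply hT1
        have hz : (n:ℝ) * (1 + a) = 0 := by linear_combination h + hk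
        rcases mul_eq_zero.mp hz with h' | h'
        · exact absurd h' hN0
        · linarith
      have has : ((n:ℝ) + a) ≠ a := by
        intro h; exact hN0 (by linarith)
      set Sk := Finset.univ.filter (fun i => μ i = k) with hSk
      set Sa := Finset.univ.filter (fun i => μ i = a) with hSa
      set Ss := Finset.univ.filter (fun i => μ i = (n:ℝ) + a) with hSs
      have hsplit : ∀ φ : ℝ → ℝ, ∑ i, φ (μ i) =
          (Sk.card : ℝ) * φ k + (Sa.card : ℝ) * φ a + (Ss.card : ℝ) * φ ((n:ℝ) + a) := by
        intro φ
        rw [← Finset.sum_filter_add_sum_filter_not Finset.univ (fun i => μ i = k) (fun i => φ (μ i))]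
        rw [← Finset.sum_filter_add_sum_filter_not
          (Finset.univ.filter fun i => ¬ μ i = k) (fun i => μ i = a) (fun i => φ (μ i))]
        have hs2 : (Finset.univ.filter fun i => ¬ μ i = k).filter (fun i => μ i = a) = Sa := by
          ext i
          simp only [Finset.mem_filter, Finset.mem_univ, true_and, hSa]
          constructor
          · rintro ⟨_, h⟩; exact h
          · intro h; exact ⟨by rw [h]; exact hak, h⟩
        have hs3 : (Finset.univ.filter fun i => ¬ μ i = k).filter (fun i => ¬ μ i = a) = Ss := by
          ext i
          simp only [Finset.mem_filter, Finset.mem_univ, true_and, hSs]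
          constructor
          · rintro ⟨h1, h2⟩
            rcases hb2 (μ i) (hevs i) h1 with h | h
            · exact absurd h h2
            · exact h
          · intro h
            refine ⟨by rw [h]; exact hks, by rw [h]; exact has⟩
        rw [hs2, hs3]
        have ek : ∑ i ∈ Sk, φ (μ i) = (Sk.card : ℝ) * φ k := by
          rw [Finset.sum_congr rfl (fun i hi => by
            rw [(Finset.mem_filter.mp hi).2] : ∀ i ∈ Sk, φ (μ i) = φ k)]
          rw [Finset.sum_const, nsmul_eq_mul]
        have ea : ∑ i ∈ Sa, φ (μ i) = (Sa.card : ℝ) * φ a := by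
          rw [Finset.sum_congr rfl (fun i hi => by
            rw [(Finset.mem_filter.mp hi).2] : ∀ i ∈ Sa, φ (μ i) = φ a)]
          rw [Finset.sum_const, nsmul_eq_mul]
        have es : ∑ i ∈ Ss, φ (μ i) = (Ss.card : ℝ) * φ ((n:ℝ) + a) := by
          rw [Finset.sum_congr rfl (fun i hi => by
            rw [(Finset.mem_filter.mp hi).2] : ∀ i ∈ Ss, φ (μ i) = φ ((n:ℝ) + a))]
          rw [Finset.sum_const, nsmul_eq_mul]
        rw [ek, ea, es]; ring
      set cR := (Sk.card : ℝ)
      set fR := (Sa.card : ℝ)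
      set gR := (Ss.card : ℝ)
      have eq1 : (n:ℝ)^2 = cR + fR + gR := by
        have := hsplit (fun _ => 1)
        simpa [hcardR] using this
      have eq2 : (0:ℝ) = cR * k + fR * a + gR * ((n:ℝ) + a) := by
        have := hsplit (fun x => x)
        rw [htr0] at this
        simpa using this
      have eq3 : (n:ℝ)^2 * k = cR * k^2 + fR * a^2 + gR * ((n:ℝ) + a)^2 := by
        have := hsplit (fun x => x^2)
        rw [htr2, hcardR] at this
        simpa using this
      have hrel : (n:ℝ) * gR = (n:ℝ) * (-a * ((n:ℝ) - cR)) := by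
        linear_combination a * eq1 - eq2 - cR * hk
      have hrel2 : gR = -a * ((n:ℝ) - cR) := mul_left_cancel₀ hN0 hrel
      by_cases hc : cR = (n:ℝ)
      · exfalso
        have hg : gR = 0 := by rw [hrel2, hc]; ring
        have hf : fR = (n:ℝ)^2 - (n:ℝ) := by rw [eq1, hc, hg]; ring
        have hzero : (n:ℝ)^2 * (a * ((n:ℝ) - 1) * (a + 1)) = 0 := by
          linear_combination (-1 : ℝ) * eq3 + (-k^2) * hc + (-((n:ℝ)^2 + 2*a*(n:ℝ) + a^2)) * hg
            + (-a^2) * hf + ((n:ℝ)^2 - (n:ℝ)*k - a*(n:ℝ) + a*(n:ℝ)^2) * hk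
        have h2 := mul_eq_zero.mp hzero
        rcases h2 with h | h
        · exact hN0 (by nlinarith)
        · rcases mul_eq_zero.mp h with h' | h'
          · rcases mul_eq_zero.mp h' with h'' | h''
            · exact ha0 h''
            · exact hN1 h''
          · exact hT1 (by linarith)
      · refine ⟨(Ss.card : ℚ) / ((n:ℚ) - (Sk.card : ℚ)), ?_⟩
        have hden : (n:ℝ) - cR ≠ 0 := fun h => hc (by linarith)
        have hdenQ : ((n:ℚ) - (Sk.card : ℚ)) ≠ 0 := by
          intro h
          apply hden
          have : ((n:ℚ) - (Sk.card : ℚ) : ℚ) = 0 := h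
          have := congrArg (fun x : ℚ => (x : ℝ)) this
          push_cast at this
          simpa using this
        rw [Rat.cast_div]
        rw [div_eq_iff (by push_cast; exact hden)]
        push_cast
        linear_combination hrel2

  obtain ⟨q, hq⟩ := hqrat
  have ht : ∃ t : ℤ, (t : ℝ) = -a := by
    -- A as an integer matrix
    set B : Matrix V V ℤ := Matrix.of (fun i j => if A i j = 0 then 0 else 1) with hB
    have hmap : B.map (Int.cast : ℤ → ℝ) = A := by
      ext i j
      rcases h01 i j with h | h
      · simp [hB, Matrix.map_apply, h]
      · rw [h]; simp [hB, Matrix.map_apply, h]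
    -- a is a root of the (integer) characteristic polynomial
    obtain ⟨x, hx0, hx⟩ := ha
    have hdet : (A - a • (1 : Matrix V V ℝ)).det = 0 := by
      rw [← Matrix.exists_mulVec_eq_zero_iff]
      refine ⟨x, hx0, ?_⟩
      rw [Matrix.sub_mulVec, Matrix.smul_mulVec, Matrix.one_mulVec, hx, sub_self]
    have hdet2 : (a • (1 : Matrix V V ℝ) - A).det = 0 := by
      have : a • (1 : Matrix V V ℝ) - A = -(A - a • 1) := (neg_sub A (a • 1)).symm
      rw [this, Matrix.det_neg, hdet, mul_zero]
    have heval : Polynomial.eval a A.charpoly = 0 := by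
      rw [Matrix.charpoly]
      have hd := RingHom.map_det (Polynomial.evalRingHom a) A.charmatrix
      simp only [Polynomial.coe_evalRingHom] at hd
      rw [hd]
      have hmm : (Polynomial.evalRingHom a).mapMatrix A.charmatrix
          = a • (1 : Matrix V V ℝ) - A := by
        ext i j
        simp only [RingHom.mapMatrix_apply, Matrix.map_apply]
        by_cases h : i = j
        · subst h
          rw [Matrix.charmatrix_apply_eq]
          simp [Matrix.one_apply, Matrix.smul_apply]
        · rw [Matrix.charmatrix_apply_ne _ _ _ h]
          simp [Matrix.one_apply, h, Matrix.smul_apply]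
      rw [hmm, hdet2]
    have hint : IsIntegral ℤ a := by
      refine ⟨B.charpoly, Matrix.charpoly_monic B, ?_⟩
      have hcp : (B.map (Int.cast : ℤ → ℝ)).charpoly
          = Polynomial.map (Int.castRingHom ℝ) B.charpoly :=
        Matrix.charpoly_map B (Int.castRingHom ℝ)
      rw [hmap] at hcp
      show Polynomial.eval₂ (algebraMap ℤ ℝ) a B.charpoly = 0
      rw [Polynomial.eval₂_eq_eval_map]
      have h2 : (algebraMap ℤ ℝ) = (Int.castRingHom ℝ) := rfl
      rw [h2, ← hcp, heval]
    have hintq : IsIntegral ℤ (q : ℚ) := by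
      have h3 : IsIntegral ℤ ((algebraMap ℚ ℝ) q) := by
        rw [eq_ratCast (algebraMap ℚ ℝ) q, hq]
        exact hint.neg
      exact (isIntegral_algebraMap_iff (algebraMap ℚ ℝ).injective).mp h3
    obtain ⟨z, hz⟩ := IsIntegrallyClosed.isIntegral_iff.mp hintq
    refine ⟨z, ?_⟩
    rw [← hq]
    have : ((z : ℚ) : ℝ) = (q : ℝ) := by
      rw [← hz]; push_cast; simp
    exact_mod_cast this
  obtain ⟨t, htval⟩ := ht
  have hkt : k = (t : ℝ) * ((n : ℝ) - 1) := by rw [htval]; exact hk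
  have hmain : ∀ b : ℝ, HasEigenvalue' A b → b ≠ k →
      b = (n : ℝ) - (t : ℝ) ∨ b = -(t : ℝ) := by
    intro b hb hbk
    rcases hb2 b hb hbk with h | h
    · right; rw [h, ← neg_neg a, ← htval]
    · left; rw [h, htval]; ring
  -- k is positive
  have hknn : 0 ≤ k := by
    have := congrFun hrow v0
    simp only [Matrix.mulVec, dotProduct, mul_one] at this
    rw [← this]
    apply Finset.sum_nonneg
    intro j _
    rcases h01 v0 j with h | h <;> rw [h] <;> norm_num
  have hkpos : 0 < k := lt_of_le_of_ne hknn (Ne.symm hk0)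
  refine ⟨⟨t, htval, hkt, hmain⟩, ?_, ?_⟩
  · intro hnpos
    have hn2 : 2 ≤ n := by omega
    have hNR : (2:ℝ) ≤ (n:ℝ) := by exact_mod_cast hn2
    have htpos : (0:ℝ) < (t:ℝ) := by nlinarith [hkpos, hkt]
    exact ⟨n, t, hnpos, by exact_mod_cast htpos, hcard, hkt, hmain⟩
  · intro hnneg
    have hNR : ((n:ℝ)) ≤ -1 := by exact_mod_cast (by omega : n ≤ -1)
    have htneg : (t:ℝ) < 0 := by nlinarith [hkpos, hkt]
    exact ⟨n, t, hnneg, by exact_mod_cast htneg, hcard, hkt, hmain⟩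
end

section
/- A strongly regular graph whose adjacency matrix has eigenvalue 0 as a restricted eigenvalue is a complete multipartite graph with parts of equal size. -/
open Matrix

/-- A strongly regular graph (not complete, not empty) having `0` as a restricted
eigenvalue of its adjacency matrix is a complete multipartite graph with parts of
equal size: non-adjacency is transitive (so the complement is a disjoint union of
cliques), and all parts (closed non-neighborhoods) have the same size. -/
theorem stmt_3 {V : Type*} [Fintype V] [DecidableEq V] (G : SimpleGraph V)
    [DecidableRel G.Adj] (v k l m : ℕ) (h : G.IsSRGWith v k l m)
    (hT : G ≠ ⊤) (hB : G ≠ ⊥)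
    (x : V → ℝ) (hx : x ≠ 0) (h0 : G.adjMatrix ℝ *ᵥ x = 0) :
    (∀ a b c : V, ¬ G.Adj a b → ¬ G.Adj b c → ¬ G.Adj a c) ∧
    (∃ s : ℕ, ∀ a : V, {b : V | ¬ G.Adj a b}.ncard = s) := by
  classical
  -- k ≠ 0, else G = ⊥
  have hk0 : k ≠ 0 := by
    intro hk
    apply hB
    ext a b
    simp only [SimpleGraph.bot_adj, iff_false]
    intro hab
    have := h.regular a
    rw [hk] at this
    have hb : b ∈ G.neighborFinset a := by
      rwa [SimpleGraph.mem_neighborFinset]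
    rw [Finset.card_eq_zero.mp this] at hb
    exact absurd hb (Finset.notMem_empty b)
  set S : ℝ := ∑ b, x b with hS
  -- neighbor sums are 0
  have hn0 : ∀ a : V, ∑ b ∈ G.neighborFinset a, x b = 0 := by
    intro a
    have := congrFun h0 a
    rwa [SimpleGraph.adjMatrix_mulVec_apply] at this
  -- complement neighbor sums
  have hc : ∀ a : V, (Gᶜ.adjMatrix ℝ *ᵥ x) a = S - x a := by
    intro a
    rw [SimpleGraph.adjMatrix_mulVec_apply, SimpleGraph.neighborFinset_compl]
    rw [Finset.sum_sdiff_eq_sub (by simp [SimpleGraph.mem_neighborFinset])]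
    rw [Finset.sum_singleton]
    have h1 : ∑ b ∈ (G.neighborFinset a)ᶜ, x b = S := by
      have h2 := Finset.sum_compl_add_sum (G.neighborFinset a) x
      rw [hn0 a, add_zero] at h2
      exact h2
    rw [h1]
  -- the key pointwise equation
  have key : ∀ a : V, (k : ℝ) * x a + (m : ℝ) * (S - x a) = 0 := by
    intro a
    have hm := h.matrix_eq (α := ℝ)
    have h2 : (G.adjMatrix ℝ ^ 2) *ᵥ x = 0 := by
      rw [pow_two, ← Matrix.mulVec_mulVec, h0, Matrix.mulVec_zero]
    rw [hm] at h2
    have := congrFun h2 a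
    simp only [Matrix.add_mulVec, Matrix.smul_mulVec] at this
    simp only [Matrix.one_mulVec, h0, smul_zero, add_zero] at this
    simp only [Pi.add_apply, Pi.smul_apply] at this
    rw [hc a] at this
    simpa [nsmul_eq_mul] using this
  -- derive k = m
  have hkm : k = m := by
    by_contra hne
    have hne' : (k : ℝ) ≠ (m : ℝ) := by exact_mod_cast hne
    -- x is constant
    have hconst : ∀ a b : V, x a = x b := by
      intro a b
      have ha := key a
      have hb := key b
      have : ((k : ℝ) - m) * (x a - x b) = 0 := by ring_nf; linarith [ha, hb]
      rcases mul_eq_zero.mp this with h' | h'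
      · exact absurd (sub_eq_zero.mp h') hne'
      · linarith [sub_eq_zero.mp h']
    obtain ⟨a, ha⟩ := Function.ne_iff.mp hx
    have hsum := hn0 a
    have : ∑ b ∈ G.neighborFinset a, x b = (k : ℝ) * x a := by
      rw [Finset.sum_congr rfl fun b _ => hconst b a, Finset.sum_const,
        show (G.neighborFinset a).card = k from h.regular a, nsmul_eq_mul]
    rw [this] at hsum
    rcases mul_eq_zero.mp hsum with h' | h'
    · exact hk0 (by exact_mod_cast h')
    · exact ha h'
  -- non-adjacent vertices have equal neighborhoods
  have hnbr : ∀ a b : V, a ≠ b → ¬ G.Adj a b → G.neighborFinset a = G.neighborFinset b := by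
    have sub : ∀ a b : V, a ≠ b → ¬ G.Adj a b →
        G.neighborFinset a ⊆ G.neighborFinset b := by
      intro a b hab hnadj
      have hcard := h.of_not_adj hab hnadj
      have hsubset : (G.commonNeighbors a b).toFinset ⊆ G.neighborFinset a := by
        intro c hc
        rw [Set.mem_toFinset] at hc
        rw [SimpleGraph.mem_neighborFinset]
        exact hc.1
      have hcards : (G.neighborFinset a).card ≤ (G.commonNeighbors a b).toFinset.card := by
        rw [Set.toFinset_card, hcard, show (G.neighborFinset a).card = k from h.regular a, hkm]
      have heq := Finset.eq_of_subset_of_card_le hsubset hcards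
      intro c hc
      rw [← heq, Set.mem_toFinset] at hc
      rw [SimpleGraph.mem_neighborFinset]
      exact hc.2
    intro a b hab hnadj
    exact Finset.Subset.antisymm (sub a b hab hnadj)
      (sub b a hab.symm fun h' => hnadj h'.symm)
  constructor
  · intro a b c hab hbc
    intro hac
    rcases eq_or_ne a b with rfl | hab'
    · exact hbc hac
    · have := hnbr a b hab' hab
      apply hbc
      have : c ∈ G.neighborFinset b := by
        rw [← this, SimpleGraph.mem_neighborFinset]
        exact hac
      rwa [SimpleGraph.mem_neighborFinset] at this
  · refine ⟨v - k, fun a => ?_⟩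
    have hset : {b : V | ¬ G.Adj a b} = ↑((G.neighborFinset a)ᶜ) := by
      ext b
      simp [SimpleGraph.mem_neighborFinset]
    rw [hset, Set.ncard_coe_finset, Finset.card_compl, show (G.neighborFinset a).card = k from h.regular a, h.card]
end

section
/- Let A be a strongly regular graph of negative Latin square type on n² vertices (n > 0) with valency t(−n−1) = −t(n+1), where t < 0, and restricted eigenvalues −n−t and −t. Suppose A admits an equitable partition into n cells of size n whose quotient matrix is b times the adjacency matrix of a strongly regular (not complete) graph à on n vertices. Then a contradiction arises: the eigenvalue −t/b of à must be a positive integer, forcing −t ≥ b, which makes the valency −t(n+1)/b of à at least n+1, exceeding n−1. -/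
open Matrix

/-- Evaluating the characteristic polynomial of a real matrix. -/
lemma aux_charpoly_eval {N : ℕ} (M : Matrix (Fin N) (Fin N) ℝ) (r : ℝ) :
    M.charpoly.eval r = ((r • (1 : Matrix (Fin N) (Fin N) ℝ)) - M).det := by
  rw [Matrix.charpoly, _root_.eval_det, Matrix.matPolyEquiv_charmatrix]
  rw [Polynomial.eval_sub, Polynomial.eval_X, Polynomial.eval_C]
  congr 1
  rw [Matrix.scalar_apply, Matrix.smul_one_eq_diagonal]

/-- A rational eigenvalue of a real 0-1 matrix is an integer. -/
lemma aux_rat_eig {N : ℕ} (M : Matrix (Fin N) (Fin N) ℝ)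
    (h01 : ∀ i j, M i j = 0 ∨ M i j = 1) (q : ℚ)
    (hq : HasEigenvalue' M (q : ℝ)) : ∃ z : ℤ, (z : ℚ) = q := by
  classical
  obtain ⟨x, hx0, hx⟩ := hq
  have hdet : ((q : ℝ) • (1 : Matrix (Fin N) (Fin N) ℝ) - M).det = 0 := by
    rw [← Matrix.exists_mulVec_eq_zero_iff]
    refine ⟨x, hx0, ?_⟩
    rw [Matrix.sub_mulVec, hx, Matrix.smul_mulVec, Matrix.one_mulVec, sub_self]
  set AZ : Matrix (Fin N) (Fin N) ℤ :=
    Matrix.of (fun i j => if M i j = 1 then 1 else 0) with hAZ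
  have hmap : AZ.map (Int.cast : ℤ → ℝ) = M := by
    ext i j
    rcases h01 i j with h | h <;> simp [hAZ, Matrix.map_apply, h]
  have hcp : M.charpoly = AZ.charpoly.map (Int.castRingHom ℝ) := by
    conv_lhs => rw [← hmap]
    exact Matrix.charpoly_map AZ (Int.castRingHom ℝ)
  have heval : (AZ.charpoly.map (Int.castRingHom ℝ)).eval (q : ℝ) = 0 := by
    rw [← hcp, aux_charpoly_eval, hdet]
  have h2 : AZ.charpoly.map (Int.castRingHom ℝ)
      = (AZ.charpoly.map (Int.castRingHom ℚ)).map (Rat.castHom ℝ) := by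
    have hcomp : (Rat.castHom ℝ).comp (Int.castRingHom ℚ) = Int.castRingHom ℝ :=
      RingHom.ext_int _ _
    rw [Polynomial.map_map, hcomp]
  have heval2 : Polynomial.eval q (AZ.charpoly.map (Int.castRingHom ℚ)) = 0 := by
    rw [h2] at heval
    have hcast : ((Polynomial.eval q (AZ.charpoly.map (Int.castRingHom ℚ)) : ℚ) : ℝ) = 0 := by
      rw [← heval]
      rw [show ((q : ℝ)) = (Rat.castHom ℝ) q from rfl]
      have h3 : Polynomial.eval ((Rat.castHom ℝ) q)
          (Polynomial.map (Rat.castHom ℝ) (AZ.charpoly.map (Int.castRingHom ℚ)))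
          = (Rat.castHom ℝ) (Polynomial.eval q (AZ.charpoly.map (Int.castRingHom ℚ))) := by
        rw [Polynomial.eval_map, Polynomial.eval₂_at_apply]
      rw [h3]
      rfl
    exact_mod_cast hcast
  have haeval : Polynomial.aeval q AZ.charpoly = 0 := by
    rw [Polynomial.aeval_def, ← Polynomial.eval_map]
    rw [show algebraMap ℤ ℚ = Int.castRingHom ℚ from rfl]
    exact heval2
  have hint : IsLocalization.IsInteger ℤ q :=
    isInteger_of_is_root_of_monic (AZ.charpoly_monic) haeval
  obtain ⟨z, hz⟩ := hint
  exact ⟨z, hz⟩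

/-- If all eigenvalues of a hermitian real matrix lie in `{α, β}`, then
`(M - α•1)(M - β•1) = 0`. -/
lemma aux_two_eig {N : ℕ} (M : Matrix (Fin N) (Fin N) ℝ) (hH : M.IsHermitian)
    (α β : ℝ) (h : ∀ i, hH.eigenvalues i = α ∨ hH.eigenvalues i = β) :
    (M - α • 1) * (M - β • 1) = 0 := by
  set U : Matrix (Fin N) (Fin N) ℝ := (hH.eigenvectorUnitary : Matrix (Fin N) (Fin N) ℝ) with hU
  have hU1 : U * star U = 1 := (Matrix.mem_unitaryGroup_iff).mp hH.eigenvectorUnitary.2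
  have hU2 : star U * U = 1 := (Matrix.mem_unitaryGroup_iff').mp hH.eigenvectorUnitary.2
  have hspec : M = U * Matrix.diagonal hH.eigenvalues * star U := by
    have := hH.spectral_theorem
    rw [RCLike.ofReal_real_eq_id] at this
    simpa using this
  have key : ∀ γ : ℝ, U * Matrix.diagonal (fun i => hH.eigenvalues i - γ) * star U = M - γ • 1 := by
    intro γ
    have hd : Matrix.diagonal (fun i => hH.eigenvalues i - γ)
        = Matrix.diagonal hH.eigenvalues - γ • 1 := by
      rw [Matrix.smul_one_eq_diagonal, Matrix.diagonal_sub]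
    rw [hd, Matrix.mul_sub, Matrix.sub_mul, ← hspec]
    congr 1
    rw [Matrix.mul_smul, Matrix.mul_one, Matrix.smul_mul, hU1]
  rw [← key α, ← key β]
  have hassoc : (U * Matrix.diagonal (fun i => hH.eigenvalues i - α) * star U) *
      (U * Matrix.diagonal (fun i => hH.eigenvalues i - β) * star U)
      = U * (Matrix.diagonal (fun i => hH.eigenvalues i - α) *
        ((star U * U) * (Matrix.diagonal (fun i => hH.eigenvalues i - β) * star U))) := by
    simp only [Matrix.mul_assoc]
  rw [hassoc, hU2, Matrix.one_mul, ← Matrix.mul_assoc (Matrix.diagonal _),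
    Matrix.diagonal_mul_diagonal]
  have : (fun i => (hH.eigenvalues i - α) * (hH.eigenvalues i - β)) = fun _ => (0 : ℝ) := by
    funext i
    rcases h i with h' | h' <;> rw [h'] <;> ring
  rw [this, Matrix.diagonal_zero, Matrix.zero_mul, Matrix.mul_zero]

/-- No strongly regular graph of negative Latin square type (on `n²` vertices,
valency `t(-n-1)` with `t < 0` and restricted eigenvalues `-n-t` and `-t`)
admits an equitable partition into `n` cells of size `n` whose quotient matrix
is `b` times the adjacency matrix of a non-complete strongly regular graph `Ã`
on `n` vertices. -/
theorem stmt_8 {V : Type*} [Fintype V] [DecidableEq V] (n : ℕ) (t b : ℤ)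
    (ht : t < 0) (hb : 0 < b) (hn : 0 < n)
    (hV : (Fintype.card V : ℤ) = (n : ℤ) ^ 2)
    (A : Matrix V V ℝ) (k l m : ℝ) (hsrg : IsSRGMatrix A k l m)
    (hk : k = (t : ℝ) * (-(n : ℝ) - 1))
    (heig : ∀ θ : ℝ, HasEigenvalue' A θ → θ ≠ k →
      θ = -(n : ℝ) - (t : ℝ) ∨ θ = -(t : ℝ))
    (c : V → Fin n)
    (hcell : ∀ i : Fin n, (Finset.univ.filter fun v => c v = i).card = n)
    (Atil : Matrix (Fin n) (Fin n) ℝ) (k' l' m' : ℝ)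
    (hsrg' : IsSRGMatrix Atil k' l' m')
    (hnotcomplete : Atil ≠ (Matrix.of fun _ _ => (1 : ℝ)) - 1)
    (hequit : A * (Matrix.of fun v i => if c v = i then (1 : ℝ) else 0)
      = (Matrix.of fun v i => if c v = i then (1 : ℝ) else 0) * ((b : ℝ) • Atil)) :
    False := by
  classical
  obtain ⟨hsymm, h01, hdiag, hval, hA2⟩ := hsrg
  obtain ⟨hsymm', h01', hdiag', hval', hA2'⟩ := hsrg'
  set P : Matrix V (Fin n) ℝ := Matrix.of fun v i => if c v = i then (1 : ℝ) else 0 with hP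
  -- basic numeric facts
  have hbR : (0 : ℝ) < (b : ℝ) := by exact_mod_cast hb
  have htR : (t : ℝ) ≤ -1 := by
    have h' : t ≤ -1 := by omega
    exact_mod_cast h'
  have hnR : (1 : ℝ) ≤ (n : ℝ) := by exact_mod_cast hn
  have hkval : k = (-(t : ℝ)) * ((n : ℝ) + 1) := by rw [hk]; ring
  have hkpos : (n : ℝ) + 1 ≤ k := by nlinarith
  have hVpos : 0 < Fintype.card V := by
    have : (0 : ℤ) < (Fintype.card V : ℤ) := by rw [hV]; positivity
    exact_mod_cast this
  have : Nonempty V := Fintype.card_pos_iff.mp hVpos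
  obtain ⟨v0⟩ := this
  have x0 : Fin n := ⟨0, hn⟩
  -- P^T * P = n • 1
  have hPtP : Pᵀ * P = (n : ℝ) • (1 : Matrix (Fin n) (Fin n) ℝ) := by
    ext i j
    simp only [Matrix.mul_apply, Matrix.transpose_apply, hP, Matrix.of_apply]
    by_cases hij : i = j
    · subst hij
      have h1 : ∀ v : V, (if c v = i then (1 : ℝ) else 0) * (if c v = i then (1 : ℝ) else 0)
          = if c v = i then (1 : ℝ) else 0 := by
        intro v; by_cases h : c v = i <;> simp [h]
      rw [Finset.sum_congr rfl (fun v _ => h1 v), Finset.sum_boole, hcell i]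
      simp
    · have h1 : ∀ v : V, (if c v = i then (1 : ℝ) else 0) * (if c v = j then (1 : ℝ) else 0)
          = 0 := by
        intro v
        by_cases h : c v = i
        · simp [h, hij]
        · simp [h]
      rw [Finset.sum_congr rfl (fun v _ => h1 v), Finset.sum_const_zero]
      simp [Matrix.one_apply_ne hij]
  have hn0 : ((n : ℝ)) ≠ 0 := by linarith
  -- cancellation of P
  have hcancel : ∀ X Y : Matrix (Fin n) (Fin n) ℝ, P * X = P * Y → X = Y := by
    intro X Y h
    have h2 := congrArg (fun M => Pᵀ * M) h
    simp only [← Matrix.mul_assoc, hPtP, Matrix.smul_mul, Matrix.one_mul] at h2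
    exact smul_right_injective _ hn0 h2
  -- P *ᵥ 1 = 1
  have hP1 : P *ᵥ (fun _ => (1 : ℝ)) = fun _ => (1 : ℝ) := by
    funext v
    simp only [Matrix.mulVec, dotProduct, hP, Matrix.of_apply, mul_one]
    rw [Finset.sum_ite_eq]
    simp
  -- b * k' = k
  have hbk : (b : ℝ) * k' = k := by
    have h := congrArg (fun M => (M *ᵥ (fun _ => (1 : ℝ))) v0) hequit
    simp only [← Matrix.mulVec_mulVec] at h
    rw [hP1, hval] at h
    have h2 : ((b : ℝ) • Atil) *ᵥ (fun _ => (1 : ℝ)) = fun _ => (b : ℝ) * k' := by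
      rw [Matrix.smul_mulVec, hval']
      funext i; simp
    rw [h2] at h
    have h3 : (P *ᵥ fun _ => (b : ℝ) * k') = fun _ => (b : ℝ) * k' := by
      have : (fun _ : Fin n => (b : ℝ) * k') = ((b : ℝ) * k') • (fun _ : Fin n => (1 : ℝ)) := by
        funext i; simp
      rw [this, Matrix.mulVec_smul, hP1]
      funext v; simp
    rw [h3] at h
    exact h.symm
  -- J_V * P = P * (n • J_n)
  set Jn : Matrix (Fin n) (Fin n) ℝ := Matrix.of fun _ _ => (1 : ℝ) with hJn
  have hJP : (Matrix.of fun _ _ : V => (1 : ℝ)) * P = P * ((n : ℝ) • Jn) := by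
    ext v i
    rw [Matrix.mul_apply, Matrix.mul_apply]
    have hL : ∀ w : V, (Matrix.of fun _ _ : V => (1 : ℝ)) v w * P w i
        = if c w = i then (1 : ℝ) else 0 := by
      intro w; simp [hP]
    have hR : ∀ j : Fin n, P v j * ((n : ℝ) • Jn) j i = if c v = j then ((n : ℝ)) else 0 := by
      intro j; by_cases h : c v = j <;> simp [hP, hJn, h]
    rw [Finset.sum_congr rfl (fun w _ => hL w), Finset.sum_boole, hcell i,
      Finset.sum_congr rfl (fun j _ => hR j), Finset.sum_ite_eq]
    simp
  -- main quotient identity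
  have hQ : (b : ℝ) ^ 2 • (Atil * Atil)
      = k • (1 : Matrix (Fin n) (Fin n) ℝ) + (l * b) • Atil + (m * n) • Jn
        - m • (1 : Matrix (Fin n) (Fin n) ℝ) - (m * b) • Atil := by
    apply hcancel
    have hW1 : A * A * P = P * ((b : ℝ) ^ 2 • (Atil * Atil)) := by
      rw [Matrix.mul_assoc, hequit, ← Matrix.mul_assoc, hequit, Matrix.mul_assoc]
      congr 1
      rw [Matrix.smul_mul, Matrix.mul_smul, smul_smul]
      ring_nf
    have hW2 : A * A * P = P * (k • (1 : Matrix (Fin n) (Fin n) ℝ) + (l * b) • Atil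
        + (m * n) • Jn - m • (1 : Matrix (Fin n) (Fin n) ℝ) - (m * b) • Atil) := by
      rw [hA2]
      rw [Matrix.add_mul, Matrix.add_mul, Matrix.smul_mul, Matrix.smul_mul, Matrix.smul_mul,
        Matrix.one_mul, Matrix.sub_mul, Matrix.sub_mul, Matrix.one_mul, hequit, hJP]
      simp only [Matrix.mul_add, Matrix.mul_sub, Matrix.mul_smul, Matrix.mul_one,
        smul_smul, smul_sub]
      module
    rw [← hW1, hW2]
  -- entry equations
  have hEntry : ∀ x y : Fin n, (b : ℝ) ^ 2 * (Atil * Atil) x y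
      = k * (1 : Matrix (Fin n) (Fin n) ℝ) x y + (l * b) * Atil x y + (m * n) * Jn x y
        - m * (1 : Matrix (Fin n) (Fin n) ℝ) x y - (m * b) * Atil x y := by
    intro x y
    have := congrFun (congrFun hQ x) y
    simpa [Matrix.smul_apply, Matrix.add_apply, Matrix.sub_apply, smul_eq_mul] using this
  have hSq : ∀ x y : Fin n, (Atil * Atil) x y
      = k' * (1 : Matrix (Fin n) (Fin n) ℝ) x y + l' * Atil x y
        + m' * (Jn x y - (1 : Matrix (Fin n) (Fin n) ℝ) x y - Atil x y) := by
    intro x y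
    have := congrFun (congrFun hA2' x) y
    simpa [Matrix.smul_apply, Matrix.add_apply, Matrix.sub_apply, smul_eq_mul, hJn] using this
  -- diagonal equation : b^2 k' = k + m n - m
  have hEd : (b : ℝ) ^ 2 * k' = k + m * n - m := by
    have h1 := hEntry x0 x0
    have h2 := hSq x0 x0
    rw [hdiag' x0] at h1 h2
    simp only [Matrix.one_apply_eq, hJn, Matrix.of_apply] at h1 h2
    rw [h2] at h1
    ring_nf at h1 ⊢
    linarith [h1]
  -- k' ≤ n - 1
  have hk'le : k' ≤ (n : ℝ) - 1 := by
    have h := congrFun hval' x0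
    simp only [Matrix.mulVec, dotProduct, mul_one] at h
    have hsplit : ∑ j : Fin n, Atil x0 j = ∑ j ∈ Finset.univ.erase x0, Atil x0 j := by
      rw [← Finset.add_sum_erase _ _ (Finset.mem_univ x0), hdiag' x0, zero_add]
    have hbound : ∑ j ∈ Finset.univ.erase x0, Atil x0 j
        ≤ ((Finset.univ.erase x0).card : ℝ) * 1 := by
      calc ∑ j ∈ Finset.univ.erase x0, Atil x0 j ≤ ∑ _j ∈ Finset.univ.erase x0, (1 : ℝ) := by
            apply Finset.sum_le_sum
            intro j _
            rcases h01' x0 j with h' | h' <;> rw [h'] <;> norm_num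
        _ = ((Finset.univ.erase x0).card : ℝ) * 1 := by
            rw [Finset.sum_const]; simp
    have hcard : ((Finset.univ.erase x0).card : ℝ) = (n : ℝ) - 1 := by
      rw [Finset.card_erase_of_mem (Finset.mem_univ x0)]
      simp only [Finset.card_univ, Fintype.card_fin]
      rw [Nat.cast_sub hn]
      simp
    rw [← h, hsplit]
    calc ∑ j ∈ Finset.univ.erase x0, Atil x0 j ≤ ((Finset.univ.erase x0).card : ℝ) * 1 := hbound
      _ = (n : ℝ) - 1 := by rw [hcard]; ring
  -- existence of a non-adjacent pair (or Atil is complete)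
  have hpair : ∃ x y : Fin n, x ≠ y ∧ Atil x y = 0 := by
    by_contra hcon
    push_neg at hcon
    apply hnotcomplete
    ext x y
    by_cases hxy : x = y
    · subst hxy
      simp [hdiag' x, Matrix.sub_apply, hJn, Matrix.one_apply_eq]
    · rcases h01' x y with h' | h'
      · exact absurd h' (hcon x y hxy)
      · simp [h', Matrix.sub_apply, hJn, Matrix.one_apply_ne hxy]
  obtain ⟨xa, ya, hxya, hAxy0⟩ := hpair
  -- non-diagonal equation : b^2 m' = m n
  have hEnd : (b : ℝ) ^ 2 * m' = m * n := by
    have h1 := hEntry xa ya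
    have h2 := hSq xa ya
    rw [hAxy0] at h1 h2
    simp only [Matrix.one_apply_ne hxya, hJn, Matrix.of_apply] at h1 h2
    rw [h2] at h1
    ring_nf at h1 ⊢
    linarith [h1]
  -- Atil is hermitian
  have hH : Atil.IsHermitian := by
    have : Atilᵀ = Atil := hsymm'
    ext i j
    have := congrFun (congrFun this i) j
    simpa [Matrix.conjTranspose_apply, Matrix.transpose_apply] using this
  -- eigenvalue lifting
  have hlift : ∀ θ : ℝ, HasEigenvalue' Atil θ → HasEigenvalue' A ((b : ℝ) * θ) := by
    rintro θ ⟨x, hx0, hx⟩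
    refine ⟨P *ᵥ x, ?_, ?_⟩
    · intro hPx
      apply hx0
      have h2 : Pᵀ *ᵥ (P *ᵥ x) = 0 := by rw [hPx, Matrix.mulVec_zero]
      rw [Matrix.mulVec_mulVec, hPtP] at h2
      have h3 : (n : ℝ) • x = 0 := by
        rw [← h2, Matrix.smul_mulVec, Matrix.one_mulVec]
      exact (smul_eq_zero_iff_right hn0).mp h3
    · rw [Matrix.mulVec_mulVec, hequit, ← Matrix.mulVec_mulVec, Matrix.smul_mulVec,
        hx, Matrix.mulVec_smul, Matrix.mulVec_smul, smul_smul]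
  -- every eigenvalue of hH is an eigenvalue in the HasEigenvalue' sense
  have hev : ∀ i : Fin n, HasEigenvalue' Atil (hH.eigenvalues i) := by
    intro i
    refine ⟨(hH.eigenvectorBasis i : Fin n → ℝ), ?_, hH.mulVec_eigenvectorBasis i⟩
    have h1 := hH.eigenvectorBasis.orthonormal.ne_zero i
    intro h2
    apply h1
    ext j
    exact congrFun h2 j
  -- main case analysis
  by_cases hsig : ∃ θ : ℝ, HasEigenvalue' Atil θ ∧ (b : ℝ) * θ = -(t : ℝ)
  · -- σ = -t/b is an eigenvalue of Atil : integrality argument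
    obtain ⟨θ, hθev, hθ⟩ := hsig
    have hbne : (b : ℝ) ≠ 0 := ne_of_gt hbR
    have hbq : ((b : ℚ)) ≠ 0 := by exact_mod_cast ne_of_gt hb
    set q : ℚ := (-t : ℚ) / (b : ℚ) with hq
    have hqR : (q : ℝ) = θ := by
      have hc : ((q : ℚ) : ℝ) = (-(t : ℝ)) / ((b : ℝ)) := by rw [hq]; push_cast; ring
      rw [hc, div_eq_iff hbne]
      linarith [hθ]
    obtain ⟨z, hz⟩ := aux_rat_eig Atil h01' q (by rw [hqR]; exact hθev)
    have hq2 : (q : ℚ) * (b : ℚ) = (-t : ℚ) := by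
      rw [hq, div_mul_cancel₀ _ hbq]
    have hzb : z * b = -t := by
      rw [← hz] at hq2
      exact_mod_cast hq2
    have hz1 : 1 ≤ z := by
      by_contra hc
      push_neg at hc
      have h0 : z ≤ 0 := by omega
      have h1 : z * b ≤ 0 := mul_nonpos_iff.mpr (Or.inr ⟨h0, le_of_lt hb⟩)
      rw [hzb] at h1
      omega
    have htb : b ≤ -t := by
      have h1 : 1 * b ≤ z * b := mul_le_mul_of_nonneg_right hz1 (le_of_lt hb)
      rw [one_mul, hzb] at h1
      exact h1
    have htbR : (b : ℝ) ≤ -(t : ℝ) := by exact_mod_cast htb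
    have hk'ge : (n : ℝ) + 1 ≤ k' := by
      have h1 : (b : ℝ) * ((n : ℝ) + 1) ≤ (b : ℝ) * k' := by
        rw [hbk, hkval]
        exact mul_le_mul_of_nonneg_right htbR (by linarith)
      exact le_of_mul_le_mul_left h1 hbR
    linarith
  · -- all eigenvalues are k/b or (-n-t)/b
    push_neg at hsig
    have hclass : ∀ i : Fin n, hH.eigenvalues i = k' ∨ hH.eigenvalues i = (-(n : ℝ) - t) / b := by
      intro i
      have hAev := hlift _ (hev i)
      by_cases hik : (b : ℝ) * hH.eigenvalues i = k
      · left
        have hbne : (b : ℝ) ≠ 0 := ne_of_gt hbR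
        rw [← hbk] at hik
        exact mul_left_cancel₀ hbne hik
      · have hbne : (b : ℝ) ≠ 0 := ne_of_gt hbR
        rcases heig _ hAev hik with h | h
        · right
          rw [eq_div_iff hbne]
          linarith [h]
        · exact absurd h (hsig _ (hev i))
    have hzero := aux_two_eig Atil hH k' ((-(n : ℝ) - t) / b) hclass
    -- expand and take the (xa, ya) entry
    have hexp : Atil * Atil - ((-(n : ℝ) - t) / b) • Atil - k' • Atil
        + (k' * ((-(n : ℝ) - t) / b)) • (1 : Matrix (Fin n) (Fin n) ℝ) = 0 := by
      have e1 : (Atil - k' • 1) * (Atil - ((-(n : ℝ) - t) / b) • 1)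
          = Atil * Atil - ((-(n : ℝ) - t) / b) • Atil - k' • Atil
            + (k' * ((-(n : ℝ) - t) / b)) • (1 : Matrix (Fin n) (Fin n) ℝ) := by
        simp only [Matrix.sub_mul, Matrix.mul_sub, Matrix.smul_mul, Matrix.mul_smul,
          Matrix.one_mul, Matrix.mul_one, smul_smul, smul_sub]
        module
      rw [← e1]
      exact hzero
    have hsqxy : (Atil * Atil) xa ya = 0 := by
      have h := congrFun (congrFun hexp xa) ya
      simp only [Matrix.sub_apply, Matrix.add_apply, Matrix.smul_apply, Matrix.zero_apply,
        hAxy0, Matrix.one_apply_ne hxya, smul_eq_mul, mul_zero, sub_zero, add_zero] at h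
      exact h
    have hm'0 : m' = 0 := by
      have h2 := hSq xa ya
      rw [hsqxy, hAxy0, Matrix.one_apply_ne hxya] at h2
      simp only [hJn, Matrix.of_apply] at h2
      ring_nf at h2
      linarith [h2]
    have hm0 : m = 0 := by
      have h := hEnd
      rw [hm'0, mul_zero] at h
      rcases mul_eq_zero.mp h.symm with h' | h'
      · exact h'
      · exact absurd h' hn0
    have hb1 : (b : ℝ) = 1 := by
      have h1 : (b : ℝ) ^ 2 * k' = k := by rw [hEd, hm0]; ring
      have hk'pos : 0 < (b : ℝ) * k' := by rw [hbk]; linarith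
      have h2 : (b : ℝ) * ((b : ℝ) * k') = 1 * ((b : ℝ) * k') := by
        linear_combination h1 - hbk
      exact mul_right_cancel₀ (ne_of_gt hk'pos) h2
    have hk'k : k' = k := by
      rw [← hbk, hb1, one_mul]
    rw [hk'k] at hk'le
    linarith
end

section
/- Let A be a strongly regular graph on n² vertices admitting an equitable partition into n cells of size n such that the quotient matrix equals b·(J_n − I_n) for a positive integer b (i.e., the quotient graph is complete). Then A has valency b(n−1) and −b is a restricted eigenvalue of A; consequently A is of Latin square type. -/
open Matrix

/-!
Vectors constant on the cells are mapped by `A` as the quotient `b • (J - 1)` maps their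
values. Applied to the all-ones vector this gives the valency `k = b(n - 1)`, and it lifts the
eigenvector `eᵢ - eⱼ` of the quotient to an eigenvector of `A` for `-b`. A restricted eigenvalue
`θ` of a strongly regular graph is a root of `θ² - (λ - μ)θ - (k - μ)`; with `θ = -b` and
`k(k - λ - 1) = μ(n² - k - 1)` this forces `μ = b² - b` and `λ = n + b² - 3b`, and then the
polynomial is `(θ + b)(θ - (n - b))`.
-/

open Matrix Function

section Equitable

variable {V ι : Type*} [Fintype ι] [DecidableEq ι]

def cellMatrix (R : Type*) [Zero R] [One R] (c : V → ι) : Matrix V ι R :=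
  Matrix.of fun v i => if c v = i then 1 else 0

theorem cellMatrix_mulVec {R : Type*} [NonAssocSemiring R] (c : V → ι) (y : ι → R) :
    cellMatrix R c *ᵥ y = y ∘ c := by
  ext v
  simp [cellMatrix, mulVec, dotProduct]

variable [Fintype V] {R : Type*} [CommSemiring R] {c : V → ι}
  {A : Matrix V V R} {Q : Matrix ι ι R}

theorem mulVec_comp_of_equitable (h : A * cellMatrix R c = cellMatrix R c * Q) (y : ι → R) :
    A *ᵥ (y ∘ c) = (Q *ᵥ y) ∘ c := by
  rw [← cellMatrix_mulVec, ← cellMatrix_mulVec, mulVec_mulVec, h, ← mulVec_mulVec]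

theorem eq_of_equitable_of_mulVec_one [Nonempty V]
    (h : A * cellMatrix R c = cellMatrix R c * Q) {k r : R}
    (hA : A *ᵥ (fun _ => 1) = fun _ => k) (hQ : Q *ᵥ (fun _ => 1) = fun _ => r) : k = r := by
  have := congrFun (mulVec_comp_of_equitable h fun _ => 1) (Classical.arbitrary V)
  simpa [comp_def, hA, hQ] using this

end Equitable

theorem HasEigenvalue'.of_equitable {V ι : Type*} [Fintype V] [Fintype ι] [DecidableEq ι]
    {c : V → ι} (hc : Surjective c) {A : Matrix V V ℝ} {Q : Matrix ι ι ℝ}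
    (h : A * cellMatrix ℝ c = cellMatrix ℝ c * Q) {θ : ℝ} (hθ : HasEigenvalue' Q θ) :
    HasEigenvalue' A θ := by
  obtain ⟨y, hy, hQy⟩ := hθ
  refine ⟨y ∘ c, fun hyc => hy ?_, by rw [mulVec_comp_of_equitable h, hQy]; rfl⟩
  ext i
  obtain ⟨v, rfl⟩ := hc i
  exact congrFun hyc v

section CompleteQuotient

variable {ι : Type*} [Fintype ι] [DecidableEq ι] (b : ℝ)

theorem smul_allOnes_sub_one_mulVec (x : ι → ℝ) :
    (b • (Matrix.of (fun _ _ => (1 : ℝ)) - 1 : Matrix ι ι ℝ)) *ᵥ x =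
      fun i => b * (∑ j, x j - x i) := by
  ext i
  simp [mulVec, dotProduct, mul_sub, sub_mul, one_apply, Finset.mul_sum]

theorem smul_allOnes_sub_one_mulVec_one :
    (b • (Matrix.of (fun _ _ => (1 : ℝ)) - 1 : Matrix ι ι ℝ)) *ᵥ (fun _ => 1) =
      fun _ => b * (Fintype.card ι - 1) := by
  simp [smul_allOnes_sub_one_mulVec]

theorem hasEigenvalue'_smul_allOnes_sub_one {i j : ι} (hij : i ≠ j) :
    HasEigenvalue' (b • (Matrix.of (fun _ _ => (1 : ℝ)) - 1) : Matrix ι ι ℝ) (-b) := by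
  refine ⟨Pi.single i 1 - Pi.single j 1, fun h => ?_, ?_⟩
  · simpa [hij] using congrFun h i
  · ext v
    simp [smul_allOnes_sub_one_mulVec, Finset.sum_sub_distrib]
    ring

end CompleteQuotient

namespace IsSRGMatrix

variable {V : Type*} [Fintype V] [DecidableEq V] {A : Matrix V V ℝ} {k l m : ℝ}

theorem sum_eq_zero_of_mulVec_eq_smul (h : IsSRGMatrix A k l m) {θ : ℝ} {x : V → ℝ}
    (hx : A *ᵥ x = θ • x) (hθk : θ ≠ k) : ∑ v, x v = 0 := by
  obtain ⟨hsymm, -, -, hrow, -⟩ := h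
  have hsum : θ * ∑ v, x v = k * ∑ v, x v :=
    calc θ * ∑ v, x v = (fun _ => 1) ⬝ᵥ (A *ᵥ x) := by
          simp [hx, dotProduct, Finset.mul_sum]
      _ = (A *ᵥ fun _ => 1) ⬝ᵥ x := by rw [dotProduct_mulVec, ← mulVec_transpose, hsymm.eq]
      _ = k * ∑ v, x v := by simp [hrow, dotProduct, Finset.mul_sum]
  by_contra hx0
  exact hθk (mul_right_cancel₀ hx0 hsum)

theorem sq_eq_of_hasEigenvalue' (h : IsSRGMatrix A k l m) {θ : ℝ} (hθ : HasEigenvalue' A θ)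
    (hθk : θ ≠ k) : θ ^ 2 = k - m + (l - m) * θ := by
  obtain ⟨x, hx0, hx⟩ := hθ
  obtain ⟨v, hv⟩ := Function.ne_iff.mp hx0
  have hJx : (Matrix.of fun _ _ => (1 : ℝ) : Matrix V V ℝ) *ᵥ x = 0 := by
    ext
    simp [mulVec, dotProduct, h.sum_eq_zero_of_mulVec_eq_smul hx hθk]
  obtain ⟨-, -, -, -, hsq⟩ := h
  have key : (θ ^ 2) • x = (k - m + (l - m) * θ) • x :=
    calc (θ ^ 2) • x = (A * A) *ᵥ x := by
          rw [← mulVec_mulVec, hx, mulVec_smul, hx, smul_smul, sq]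
      _ = _ := by
        rw [hsq]
        simp only [add_mulVec, sub_mulVec, smul_mulVec, one_mulVec, hx, hJx]
        module
  exact mul_right_cancel₀ hv (by simpa using congrFun key v)

theorem param_eq [Nonempty V] (h : IsSRGMatrix A k l m) :
    k * (k - l - 1) = m * (Fintype.card V - k - 1) := by
  obtain ⟨-, -, -, hrow, hsq⟩ := h
  have hJ : (Matrix.of fun _ _ => (1 : ℝ) : Matrix V V ℝ) *ᵥ (fun _ => 1) =
      (Fintype.card V : ℝ) • fun _ => 1 := by
    ext
    simp [mulVec, dotProduct]
  replace hrow : A *ᵥ (fun _ => 1) = k • fun _ => 1 := by rw [hrow]; ext; simp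
  have key : (k ^ 2) • (fun _ => 1 : V → ℝ) =
      (k + l * k + m * (Fintype.card V - 1 - k)) • fun _ => 1 :=
    calc (k ^ 2) • (fun _ => 1 : V → ℝ) = (A * A) *ᵥ (fun _ => 1) := by
          rw [← mulVec_mulVec, hrow, mulVec_smul, hrow, smul_smul, sq]
      _ = _ := by
        rw [hsq]
        simp only [add_mulVec, sub_mulVec, smul_mulVec, one_mulVec, hrow, hJ]
        module
  have := congrFun key (Classical.arbitrary V)
  simp only [Pi.smul_apply, smul_eq_mul, mul_one] at this
  linear_combination this

end IsSRGMatrix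

theorem srg_params_of_neg_root {n b k l m : ℝ} (hn : 1 < n) (hb : b ≠ 0)
    (hk : k = b * (n - 1)) (hcount : k * (k - l - 1) = m * (n ^ 2 - k - 1))
    (hroot : (-b) ^ 2 = k - m + (l - m) * (-b)) :
    m = b ^ 2 - b ∧ l = n + b ^ 2 - 3 * b := by
  subst hk
  have hm : m = b ^ 2 - b := by
    have : (n - 1) * n * (m - (b ^ 2 - b)) = 0 := by
      linear_combination -hcount - (n - 1) * hroot
    have hn0 : (n - 1) * n ≠ 0 := by positivity
    linear_combination (mul_eq_zero.mp this).resolve_left hn0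
  refine ⟨hm, mul_right_cancel₀ hb ?_⟩
  subst hm
  linear_combination hroot

/-- If a strongly regular graph on `n²` vertices admits an equitable partition
into `n` cells of size `n` whose quotient matrix is `b·(J - I)` (the quotient
graph is complete), then its valency is `b(n-1)`, `-b` is a restricted
eigenvalue, and the graph is of Latin square type. -/
theorem stmt_9 {V : Type*} [Fintype V] [DecidableEq V] (n : ℕ) (b : ℤ)
    (hb : 0 < b) (hn : 1 < n) (hV : Fintype.card V = n ^ 2)
    (A : Matrix V V ℝ) (k l m : ℝ) (hsrg : IsSRGMatrix A k l m)
    (c : V → Fin n)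
    (hcell : ∀ i : Fin n, (Finset.univ.filter fun v => c v = i).card = n)
    (hequit : A * (Matrix.of fun v i => if c v = i then (1 : ℝ) else 0)
      = (Matrix.of fun v i => if c v = i then (1 : ℝ) else 0) *
        ((b : ℝ) • ((Matrix.of fun _ _ => (1 : ℝ)) - (1 : Matrix (Fin n) (Fin n) ℝ)))) :
    k = (b : ℝ) * ((n : ℝ) - 1) ∧ HasEigenvalue' A (-(b : ℝ)) ∧
      IsLatinSquareType A k := by
  have hc : Function.Surjective c := fun i => by
    obtain ⟨v, hv⟩ := Finset.card_pos.mp (by rw [hcell i]; omega)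
    exact ⟨v, (Finset.mem_filter.mp hv).2⟩
  have : Nonempty V := ⟨(hc ⟨0, by omega⟩).choose⟩
  have hbR : (0 : ℝ) < b := by exact_mod_cast hb
  have hnR : (1 : ℝ) < n := by exact_mod_cast hn
  have hrow : A *ᵥ (fun _ => 1) = fun _ => k := hsrg.2.2.2.1
  have hk : k = b * (n - 1) := by
    simpa using eq_of_equitable_of_mulVec_one hequit hrow
      (smul_allOnes_sub_one_mulVec_one (b : ℝ))
  have heig : HasEigenvalue' A (-(b : ℝ)) :=
    (hasEigenvalue'_smul_allOnes_sub_one (b : ℝ)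
      (show (⟨0, by omega⟩ : Fin n) ≠ ⟨1, hn⟩ by simp)).of_equitable hc hequit
  have hbk : -(b : ℝ) ≠ k := by rw [hk]; nlinarith
  obtain ⟨hm, hl⟩ := srg_params_of_neg_root hnR hbR.ne' hk
    (by simpa [hV] using hsrg.param_eq) (hsrg.sq_eq_of_hasEigenvalue' heig hbk)
  refine ⟨hk, heig, n, b, by exact_mod_cast (by omega : 0 < n), hb, by exact_mod_cast hV,
    by simpa using hk, ?_⟩
  intro θ hθ hθk
  have hquad := hsrg.sq_eq_of_hasEigenvalue' hθ hθk
  rw [hk, hm, hl] at hquad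
  have hfac : (θ - (n - b)) * (θ + b) = 0 := by linear_combination hquad
  simpa [sub_eq_zero, eq_neg_iff_add_eq_zero] using hfac
end

section
/- Let A be the adjacency matrix of the lattice graph L₂(n) (the line graph of K_{n,n}), with vertex set {1,…,n}². Every eigenvector f of A for the eigenvalue n−2 can be written as f_{(i,j)} = h_i + v_j where h and v are vectors in ℝⁿ each orthogonal to the all-ones vector. -/
open Matrix

/-- The adjacency matrix of the lattice graph `L₂(n)` on vertex set
`{1,…,n} × {1,…,n}`: two vertices are adjacent iff they agree in exactly one
coordinate. -/
def latticeAdj (n : ℕ) : Matrix (Fin n × Fin n) (Fin n × Fin n) ℝ :=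
  Matrix.of fun p q =>
    if (p.1 = q.1 ∧ p.2 ≠ q.2) ∨ (p.1 ≠ q.1 ∧ p.2 = q.2) then 1 else 0

/-- Every eigenvector of the lattice graph `L₂(n)` for the eigenvalue `n - 2`
can be written as `f (i,j) = h i + v j` with `h` and `v` orthogonal to the
all-ones vector. -/
theorem stmt_10 (n : ℕ) (f : Fin n × Fin n → ℝ) (hf0 : f ≠ 0)
    (hf : latticeAdj n *ᵥ f = ((n : ℝ) - 2) • f) :
    ∃ h v : Fin n → ℝ, (∑ i, h i = 0) ∧ (∑ j, v j = 0) ∧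
      ∀ i j : Fin n, f (i, j) = h i + v j := by
  have key : ∀ i j : Fin n, (n : ℝ) * f (i, j)
      = (∑ j', f (i, j')) + (∑ i', f (i', j)) := by
    intro i j
    have h1 := congrFun hf (i, j)
    simp only [mulVec, dotProduct, latticeAdj, of_apply, Pi.smul_apply,
      smul_eq_mul] at h1
    have expand : ∀ q : Fin n × Fin n,
        (if ((i, j).1 = q.1 ∧ (i, j).2 ≠ q.2) ∨ ((i, j).1 ≠ q.1 ∧ (i, j).2 = q.2)
          then (1 : ℝ) else 0) * f q
        = (if i = q.1 then f q else 0) + (if j = q.2 then f q else 0)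
          - (if (i, j) = q then 2 * f q else 0) := by
      rintro ⟨a, b⟩
      by_cases h1 : i = a <;> by_cases h2 : j = b <;>
        simp [h1, h2, Prod.ext_iff] <;> ring
    rw [Finset.sum_congr rfl (fun q _ => expand q)] at h1
    rw [Finset.sum_sub_distrib, Finset.sum_add_distrib] at h1
    have e1 : (∑ q : Fin n × Fin n, if i = q.1 then f q else 0)
        = ∑ j', f (i, j') := by
      rw [Fintype.sum_prod_type]
      calc (∑ x : Fin n, ∑ y : Fin n, if i = x then f (x, y) else 0)
          = ∑ x : Fin n, if i = x then ∑ y, f (x, y) else 0 := by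
            refine Finset.sum_congr rfl fun x _ => ?_
            split <;> simp
        _ = _ := by rw [Finset.sum_ite_eq]; simp
    have e2 : (∑ q : Fin n × Fin n, if j = q.2 then f q else 0)
        = ∑ i', f (i', j) := by
      rw [Fintype.sum_prod_type_right]
      calc (∑ y : Fin n, ∑ x : Fin n, if j = y then f (x, y) else 0)
          = ∑ y : Fin n, if j = y then ∑ x, f (x, y) else 0 := by
            refine Finset.sum_congr rfl fun y _ => ?_
            split <;> simp
        _ = _ := by rw [Finset.sum_ite_eq]; simp
    have e3 : (∑ q : Fin n × Fin n, if (i, j) = q then 2 * f q else 0)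
        = 2 * f (i, j) := by
      rw [Finset.sum_ite_eq]
      simp
    rw [e1, e2, e3] at h1
    linarith [h1]
  set S : ℝ := ∑ p : Fin n × Fin n, f p with hSdef
  have hRsum : (∑ i : Fin n, ∑ j' : Fin n, f (i, j')) = S := by
    rw [hSdef, Fintype.sum_prod_type]
  have hCsum : (∑ j : Fin n, ∑ i' : Fin n, f (i', j)) = S := by
    rw [hSdef, Fintype.sum_prod_type_right]
  have hS : S = 0 := by
    rcases Nat.eq_zero_or_pos n with h0 | hpos
    · subst h0
      simp [hSdef]
    · have t : (n : ℝ) * S = 2 * ((n : ℝ) * S) := by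
        have := Finset.sum_congr rfl
          (fun p (_ : p ∈ (Finset.univ : Finset (Fin n × Fin n))) => key p.1 p.2)
        calc (n : ℝ) * S = ∑ p : Fin n × Fin n, (n : ℝ) * f p := by
              rw [Finset.mul_sum]
          _ = ∑ p : Fin n × Fin n,
                ((∑ j', f (p.1, j')) + (∑ i', f (i', p.2))) := this
          _ = (∑ p : Fin n × Fin n, ∑ j', f (p.1, j'))
              + ∑ p : Fin n × Fin n, ∑ i', f (i', p.2) := by
              rw [Finset.sum_add_distrib]
          _ = (n : ℝ) * S + (n : ℝ) * S := by
              have hA : (∑ p : Fin n × Fin n, ∑ j', f (p.1, j')) = (n : ℝ) * S := by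
                rw [Fintype.sum_prod_type]
                simp only [Finset.sum_const, Finset.card_univ, Fintype.card_fin,
                  nsmul_eq_mul]
                rw [← Finset.mul_sum, hRsum]
              have hB : (∑ p : Fin n × Fin n, ∑ i', f (i', p.2)) = (n : ℝ) * S := by
                rw [Fintype.sum_prod_type_right]
                simp only [Finset.sum_const, Finset.card_univ, Fintype.card_fin,
                  nsmul_eq_mul]
                rw [← Finset.mul_sum, hCsum]
              rw [hA, hB]
          _ = 2 * ((n : ℝ) * S) := by ring
      have hn : (n : ℝ) ≠ 0 := Nat.cast_ne_zero.mpr hpos.ne'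
      have : (n : ℝ) * S = 0 := by linarith
      exact (mul_eq_zero.mp this).resolve_left hn
  refine ⟨fun i => (∑ j', f (i, j')) / n, fun j => (∑ i', f (i', j)) / n, ?_, ?_, ?_⟩
  · rw [← Finset.sum_div, hRsum, hS, zero_div]
  · rw [← Finset.sum_div, hCsum, hS, zero_div]
  · intro i j
    have hn : (n : ℝ) ≠ 0 := Nat.cast_ne_zero.mpr (Nat.pos_of_ne_zero (by
      rintro rfl; exact i.elim0)).ne'
    field_simp
    rw [← key i j]
    ring
end

section
/- The adjacency matrix A of the lattice graph L₂(n) on n² vertices satisfies n²E = (2n−2)I + (n−2)A − 2(J − I − A), where E is the orthogonal projection onto the eigenspace of A for eigenvalue n−2; equivalently, the matrix E defined by this formula is idempotent, symmetric, and satisfies AE = (n−2)E and EJ = 0. -/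
open Matrix Kronecker

namespace Stmt11Aux

variable (n : ℕ)

/-- The all-ones `n × n` matrix. -/
def Jn : Matrix (Fin n) (Fin n) ℝ := Matrix.of fun _ _ => 1

lemma Jn_mul_Jn : Jn n * Jn n = (n : ℝ) • Jn n := by
  ext a b
  simp [Jn, Matrix.mul_apply]

/-- `L₂(n)` is the Cartesian product of two complete graphs `Kₙ`. -/
lemma latticeAdj_eq :
    latticeAdj n = Jn n ⊗ₖ 1 + 1 ⊗ₖ Jn n - (2 : ℝ) • 1 := by
  ext ⟨p1, p2⟩ ⟨q1, q2⟩
  by_cases h1 : p1 = q1 <;> by_cases h2 : p2 = q2 <;>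
    simp [latticeAdj, Jn, Matrix.one_apply, Prod.ext_iff, h1, h2] <;> norm_num

/-- `M = n² E`. -/
noncomputable def M : Matrix (Fin n × Fin n) (Fin n × Fin n) ℝ :=
  (n : ℝ) • (Jn n ⊗ₖ 1 + 1 ⊗ₖ Jn n) - (2 : ℝ) • (Jn n ⊗ₖ Jn n)

lemma M_mul_M : M n * M n = ((n : ℝ) ^ 2) • M n := by
  simp only [M, sub_mul, mul_sub, smul_mul_assoc, mul_smul_comm, add_mul, mul_add,
    ← Matrix.mul_kronecker_mul, Jn_mul_Jn, Matrix.one_mul, Matrix.mul_one,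
    Matrix.smul_kronecker, Matrix.kronecker_smul, Matrix.one_kronecker_one]
  module

lemma A_mul_M : latticeAdj n * M n = ((n : ℝ) - 2) • M n := by
  rw [latticeAdj_eq]
  simp only [M, sub_mul, mul_sub, smul_mul_assoc, mul_smul_comm, add_mul, mul_add,
    ← Matrix.mul_kronecker_mul, Jn_mul_Jn, Matrix.one_mul, Matrix.mul_one,
    Matrix.smul_kronecker, Matrix.kronecker_smul, Matrix.one_kronecker_one]
  module

lemma M_mul_J : M n * (Jn n ⊗ₖ Jn n) = 0 := by
  simp only [M, sub_mul, smul_mul_assoc, add_mul,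
    ← Matrix.mul_kronecker_mul, Jn_mul_Jn, Matrix.one_mul, Matrix.mul_one,
    Matrix.smul_kronecker, Matrix.kronecker_smul]
  module

lemma J_mul_A : (Jn n ⊗ₖ Jn n) * latticeAdj n = (2 * (n : ℝ) - 2) • (Jn n ⊗ₖ Jn n) := by
  rw [latticeAdj_eq]
  simp only [mul_sub, mul_smul_comm, mul_add,
    ← Matrix.mul_kronecker_mul, Jn_mul_Jn, Matrix.one_mul, Matrix.mul_one,
    Matrix.smul_kronecker, Matrix.kronecker_smul, Matrix.one_kronecker_one]
  module

lemma M_eq : M n = (n : ℝ) • latticeAdj n + (2 * (n : ℝ)) • 1 - (2 : ℝ) • (Jn n ⊗ₖ Jn n) := by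
  rw [latticeAdj_eq, M]
  module

lemma M_transpose : (M n)ᵀ = M n := by
  ext p q
  by_cases h1 : p.1 = q.1 <;> by_cases h2 : p.2 = q.2 <;>
    simp [M, Jn, Matrix.one_apply, h1, h2, eq_comm]

end Stmt11Aux

open Stmt11Aux

/-- The matrix `E` with `n²E = (2n-2)I + (n-2)A - 2(J - I - A)`, where `A` is
the adjacency matrix of the lattice graph `L₂(n)`, is the orthogonal projection
onto the eigenspace of `A` for the eigenvalue `n - 2`: it is idempotent,
symmetric, satisfies `AE = (n-2)E` and `EJ = 0`, and acts as the identity on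
that eigenspace. -/
theorem stmt_11 (n : ℕ) (hn : 0 < n) :
    let A := latticeAdj n
    let J : Matrix (Fin n × Fin n) (Fin n × Fin n) ℝ := Matrix.of fun _ _ => 1
    let E := ((n : ℝ) ^ 2)⁻¹ •
      ((2 * (n : ℝ) - 2) • (1 : Matrix (Fin n × Fin n) (Fin n × Fin n) ℝ) +
        ((n : ℝ) - 2) • A - (2 : ℝ) • (J - 1 - A))
    E * E = E ∧ E.IsSymm ∧ A * E = ((n : ℝ) - 2) • E ∧ E * J = 0 ∧
      ∀ x : Fin n × Fin n → ℝ, A *ᵥ x = ((n : ℝ) - 2) • x → E *ᵥ x = x := by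
  intro A J E
  have hn' : (n : ℝ) ≠ 0 := Nat.cast_ne_zero.mpr hn.ne'
  have hJ' : J = Jn n ⊗ₖ Jn n := by
    ext ⟨p1, p2⟩ ⟨q1, q2⟩
    simp [J, Jn]
  have hE : E = ((n : ℝ) ^ 2)⁻¹ • M n := by
    show ((n : ℝ) ^ 2)⁻¹ •
      ((2 * (n : ℝ) - 2) • (1 : Matrix (Fin n × Fin n) (Fin n × Fin n) ℝ) +
        ((n : ℝ) - 2) • latticeAdj n - (2 : ℝ) • (J - 1 - latticeAdj n)) = _
    rw [hJ', latticeAdj_eq, M]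
    module
  refine ⟨?_, ?_, ?_, ?_, ?_⟩
  · rw [hE, smul_mul_assoc, Matrix.mul_smul, M_mul_M, smul_smul, smul_smul]
    congr 1
    field_simp
  · rw [Matrix.IsSymm, hE, Matrix.transpose_smul, M_transpose]
  · show latticeAdj n * E = ((n : ℝ) - 2) • E
    rw [hE, Matrix.mul_smul, A_mul_M, smul_comm]
  · rw [hE, smul_mul_assoc, hJ', M_mul_J, smul_zero]
  · intro x hx
    have hx' : latticeAdj n *ᵥ x = ((n : ℝ) - 2) • x := hx
    have hJx : (Jn n ⊗ₖ Jn n) *ᵥ x = 0 := by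
      have h2 : (Jn n ⊗ₖ Jn n) *ᵥ (latticeAdj n *ᵥ x)
          = ((n : ℝ) - 2) • ((Jn n ⊗ₖ Jn n) *ᵥ x) := by
        rw [hx', Matrix.mulVec_smul]
      rw [Matrix.mulVec_mulVec, J_mul_A, Matrix.smul_mulVec] at h2
      have h3 : (n : ℝ) • ((Jn n ⊗ₖ Jn n) *ᵥ x) = 0 := by
        have h4 := sub_eq_zero.mpr h2
        rw [← sub_smul] at h4
        convert h4 using 2
        ring
      exact (smul_eq_zero.mp h3).resolve_left hn'
    rw [hE, Matrix.smul_mulVec, M_eq]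
    rw [Matrix.sub_mulVec, Matrix.add_mulVec, Matrix.smul_mulVec,
      Matrix.smul_mulVec, Matrix.smul_mulVec, hx', hJx, Matrix.one_mulVec,
      smul_zero, sub_zero, smul_smul]
    ext i
    simp only [Pi.smul_apply, Pi.add_apply, smul_eq_mul]
    field_simp
    ring
end

section
/- Let E be a symmetric idempotent matrix of rank m indexed by {1,…,n}² that commutes with the adjacency matrix A of the lattice graph L₂(n), satisfies AE = (n−2)E, has constant diagonal, and satisfies that E∘A is a scalar multiple of A and E∘(J−I−A) is a scalar multiple of J−I−A (where ∘ is entrywise product). Then n²E = (2n−2)I + (n−2)A − 2(J−I−A) and m = 2(n−1); i.e., E is the spectral idempotent of A for eigenvalue n−2. -/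
open Matrix Finset

lemma trace_idem {ι : Type*} [Fintype ι] [DecidableEq ι] (N : Matrix ι ι ℝ) (h : N * N = N) :
    N.trace = (N.rank : ℝ) := by
  have hf : N.mulVecLin ∘ₗ N.mulVecLin = N.mulVecLin := by rw [← Matrix.mulVecLin_mul, h]
  have hproj : LinearMap.IsProj (LinearMap.range N.mulVecLin) N.mulVecLin :=
    ⟨fun x => LinearMap.mem_range_self _ x,
     fun x hx => by obtain ⟨y, rfl⟩ := hx; have := LinearMap.ext_iff.mp hf y; simpa using this⟩
  have ht := hproj.trace
  rw [Matrix.rank, ← ht, LinearMap.trace_eq_matrix_trace ℝ (Pi.basisFun ℝ ι),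
    LinearMap.toMatrix_eq_toMatrix', ← Matrix.toLin'_apply', LinearMap.toMatrix'_toLin']

lemma ite_mul_ite' (P Q : Prop) [Decidable P] [Decidable Q] :
    (if P then (1:ℝ) else 0) * (if Q then (1:ℝ) else 0) = if P ∧ Q then (1:ℝ) else 0 := by
  split_ifs <;> simp_all

lemma latticeAdj_diag (n : ℕ) (p : Fin n × Fin n) : latticeAdj n p p = 0 := by
  simp [latticeAdj]

lemma fin_zero_ne_one {n : ℕ} : (0 : Fin (n+2)) ≠ 1 := by
  simp [Fin.ext_iff]

lemma degSum (n : ℕ) (hn : 1 ≤ n) (p : Fin n × Fin n) :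
    ∑ q : Fin n × Fin n, latticeAdj n p q = 2 * (n : ℝ) - 2 := by
  unfold latticeAdj
  simp only [of_apply]
  rw [Finset.sum_boole]
  have hfil : Finset.univ.filter
      (fun q : Fin n × Fin n => (p.1 = q.1 ∧ p.2 ≠ q.2) ∨ (p.1 ≠ q.1 ∧ p.2 = q.2))
      = (({p.1} : Finset (Fin n)) ×ˢ (({p.2} : Finset (Fin n))ᶜ)) ∪
        ((({p.1} : Finset (Fin n))ᶜ) ×ˢ ({p.2} : Finset (Fin n))) := by
    ext q
    simp only [Finset.mem_filter, Finset.mem_univ, true_and, Finset.mem_union,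
      Finset.mem_product, Finset.mem_singleton, Finset.mem_compl]
    constructor
    · rintro (⟨h1, h2⟩ | ⟨h1, h2⟩)
      · exact Or.inl ⟨h1.symm, fun h => h2 h.symm⟩
      · exact Or.inr ⟨fun h => h1 h.symm, h2.symm⟩
    · rintro (⟨h1, h2⟩ | ⟨h1, h2⟩)
      · exact Or.inl ⟨h1.symm, fun h => h2 h.symm⟩
      · exact Or.inr ⟨fun h => h1 h.symm, h2.symm⟩
  rw [hfil, Finset.card_union_of_disjoint, Finset.card_product, Finset.card_product]
  · simp only [Finset.card_singleton, Finset.card_compl, Finset.card_singleton, Fintype.card_fin]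
    push_cast [Nat.cast_sub hn]
    ring
  · rw [Finset.disjoint_left]
    rintro ⟨a, b⟩ hab hab'
    simp only [Finset.mem_product, Finset.mem_singleton, Finset.mem_compl] at hab hab'
    exact hab'.1 hab.1

lemma commonAdj (n : ℕ) :
    ∑ r : Fin (n+2) × Fin (n+2), latticeAdj (n+2) ((0 : Fin (n+2)), (0 : Fin (n+2))) r
      * latticeAdj (n+2) r ((0 : Fin (n+2)), (1 : Fin (n+2))) = (n : ℝ) := by
  have h01 := fin_zero_ne_one (n := n)
  unfold latticeAdj
  simp only [of_apply]
  simp_rw [ite_mul_ite']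
  rw [Finset.sum_boole]
  have hfil : Finset.univ.filter (fun r : Fin (n+2) × Fin (n+2) =>
      (((0:Fin (n+2)) = r.1 ∧ (0:Fin (n+2)) ≠ r.2) ∨ ((0:Fin (n+2)) ≠ r.1 ∧ (0:Fin (n+2)) = r.2)) ∧
      ((r.1 = 0 ∧ r.2 ≠ 1) ∨ (r.1 ≠ 0 ∧ r.2 = 1)))
      = ({(0:Fin (n+2))} : Finset (Fin (n+2))) ×ˢ (({0, 1} : Finset (Fin (n+2)))ᶜ) := by
    ext r
    simp only [Finset.mem_filter, Finset.mem_univ, true_and, Finset.mem_product,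
      Finset.mem_singleton, Finset.mem_compl, Finset.mem_insert]
    constructor
    · rintro ⟨h1 | h1, h2 | h2⟩
      · exact ⟨h1.1.symm, fun h => (h.elim (fun h' => h1.2 h'.symm) h2.2)⟩
      · exact absurd h1.1.symm h2.1
      · exact absurd h2.1.symm h1.1
      · exact absurd (h1.2.trans h2.2) h01
    · rintro ⟨h1, h2⟩
      push_neg at h2
      exact ⟨Or.inl ⟨h1.symm, fun h => h2.1 h.symm⟩, Or.inl ⟨h1, h2.2⟩⟩
  rw [hfil, Finset.card_product]
  have hc2 : ({0, 1} : Finset (Fin (n+2))).card = 2 := by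
    rw [Finset.card_insert_of_notMem (by simpa using h01), Finset.card_singleton]
  simp only [Finset.card_singleton, Finset.card_compl, Fintype.card_fin, hc2, one_mul]
  push_cast
  ring

lemma commonNon (n : ℕ) :
    ∑ r : Fin (n+2) × Fin (n+2), latticeAdj (n+2) ((0 : Fin (n+2)), (0 : Fin (n+2))) r
      * latticeAdj (n+2) r ((1 : Fin (n+2)), (1 : Fin (n+2))) = 2 := by
  have h01 := fin_zero_ne_one (n := n)
  unfold latticeAdj
  simp only [of_apply]
  simp_rw [ite_mul_ite']
  rw [Finset.sum_boole]
  have hfil : Finset.univ.filter (fun r : Fin (n+2) × Fin (n+2) =>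
      (((0:Fin (n+2)) = r.1 ∧ (0:Fin (n+2)) ≠ r.2) ∨ ((0:Fin (n+2)) ≠ r.1 ∧ (0:Fin (n+2)) = r.2)) ∧
      ((r.1 = 1 ∧ r.2 ≠ 1) ∨ (r.1 ≠ 1 ∧ r.2 = 1)))
      = ({((0:Fin (n+2)), (1:Fin (n+2))), ((1:Fin (n+2)), (0:Fin (n+2)))} :
          Finset (Fin (n+2) × Fin (n+2))) := by
    ext r
    simp only [Finset.mem_filter, Finset.mem_univ, true_and, Finset.mem_insert,
      Finset.mem_singleton, Prod.ext_iff]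
    constructor
    · rintro ⟨h1 | h1, h2 | h2⟩
      · exact absurd (h1.1.trans h2.1) h01
      · exact Or.inl ⟨h1.1.symm, h2.2⟩
      · exact Or.inr ⟨h2.1, h1.2.symm⟩
      · exact absurd (h1.2.trans h2.2) h01
    · rintro (⟨h1, h2⟩ | ⟨h1, h2⟩)
      · refine ⟨Or.inl ⟨h1.symm, ?_⟩, Or.inr ⟨?_, h2⟩⟩
        · rw [h2]; exact h01
        · rw [h1]; exact h01
      · refine ⟨Or.inr ⟨?_, h2.symm⟩, Or.inl ⟨h1, ?_⟩⟩
        · rw [h1]; exact h01.symm ∘ Eq.symm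
        · rw [h2]; exact h01
  rw [hfil]
  rw [Finset.card_insert_of_notMem, Finset.card_singleton]
  · norm_num
  · simp only [Finset.mem_singleton, Prod.ext_iff, not_and]
    intro h; exact absurd h.symm (fun hh => h01 hh.symm)

/-- A nonzero symmetric idempotent `E` of rank `m` that commutes with the
adjacency matrix `A` of the lattice graph `L₂(n)`, satisfies `AE = (n-2)E`,
has constant diagonal, and whose entrywise products with `A` and with
`J - I - A` are scalar multiples of `A` and `J - I - A`, must be the spectral
idempotent of `A` for the eigenvalue `n - 2`; in particular `m = 2(n-1)`. -/
theorem stmt_12 (n m : ℕ)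
    (E : Matrix (Fin n × Fin n) (Fin n × Fin n) ℝ)
    (J : Matrix (Fin n × Fin n) (Fin n × Fin n) ℝ)
    (hJ : J = Matrix.of fun _ _ => 1)
    (hsym : E.IsSymm) (hidem : E * E = E) (hE0 : E ≠ 0) (hrank : E.rank = m)
    (hcomm : latticeAdj n * E = E * latticeAdj n)
    (heig : latticeAdj n * E = ((n : ℝ) - 2) • E)
    (hdiag : ∃ d : ℝ, ∀ p, E p p = d)
    (hEA : ∃ θ : ℝ, Matrix.hadamard E (latticeAdj n) = θ • latticeAdj n)
    (hEC : ∃ η : ℝ, Matrix.hadamard E (J - 1 - latticeAdj n)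
      = η • (J - 1 - latticeAdj n)) :
    ((n : ℝ) ^ 2) • E =
      (2 * (n : ℝ) - 2) • (1 : Matrix (Fin n × Fin n) (Fin n × Fin n) ℝ) +
        ((n : ℝ) - 2) • latticeAdj n - (2 : ℝ) • (J - 1 - latticeAdj n) ∧
    m = 2 * (n - 1) := by
  subst hJ
  obtain ⟨d, hd⟩ := hdiag
  obtain ⟨θ, hθ⟩ := hEA
  obtain ⟨η, hη⟩ := hEC
  rcases Nat.lt_or_ge n 2 with hn | hn
  · interval_cases n
    · exact absurd (by ext i j; exact i.1.elim0) hE0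
    · refine absurd ?_ hE0
      have hA1 : latticeAdj 1 = 0 := by
        ext p q
        have h1 : p.1 = q.1 := Subsingleton.elim _ _
        have h2 : p.2 = q.2 := Subsingleton.elim _ _
        simp [latticeAdj, h1, h2]
      rw [hA1, zero_mul] at heig
      have h12 : ((1:ℕ) : ℝ) - 2 = -1 := by norm_num
      rw [h12] at heig
      ext i j
      have := congrFun (congrFun heig i) j
      simp only [Matrix.zero_apply, Matrix.smul_apply, smul_eq_mul] at this ⊢
      linarith
  · obtain ⟨k, rfl⟩ : ∃ k, n = k + 2 := ⟨n - 2, by omega⟩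
    have h01 : (0 : Fin (k+2)) ≠ 1 := fin_zero_ne_one (n := k)
    -- entry values of E
    have hEfun : ∀ p q : Fin (k+2) × Fin (k+2), E p q =
        if p = q then d else
        if (p.1 = q.1 ∧ p.2 ≠ q.2) ∨ (p.1 ≠ q.1 ∧ p.2 = q.2) then θ else η := by
      intro p q
      split_ifs with h1 h2
      · subst h1; exact hd p
      · have hApq : latticeAdj (k+2) p q = 1 := by simp only [latticeAdj, of_apply, if_pos h2]
        have := congrFun (congrFun hθ p) q
        rw [Matrix.hadamard_apply, Matrix.smul_apply, hApq, smul_eq_mul, mul_one, mul_one] at this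
        exact this
      · have hApq : latticeAdj (k+2) p q = 0 := by simp only [latticeAdj, of_apply, if_neg h2]
        have hBpq : ((Matrix.of fun _ _ => (1:ℝ)) - 1 - latticeAdj (k+2) :
            Matrix (Fin (k+2) × Fin (k+2)) (Fin (k+2) × Fin (k+2)) ℝ) p q = 1 := by
          simp only [Matrix.sub_apply, Matrix.of_apply, Matrix.one_apply, if_neg h1, hApq]
          ring
        have := congrFun (congrFun hη p) q
        rw [Matrix.hadamard_apply, Matrix.smul_apply, hBpq, smul_eq_mul, mul_one, mul_one] at this
        exact this
    -- decomposition of A p r * E r q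
    have hdecomp : ∀ p q r : Fin (k+2) × Fin (k+2), latticeAdj (k+2) p r * E r q
        = d * (if r = q then latticeAdj (k+2) p r else 0)
          + θ * (latticeAdj (k+2) p r * latticeAdj (k+2) r q)
          + η * (latticeAdj (k+2) p r - (if r = q then latticeAdj (k+2) p r else 0)
                 - latticeAdj (k+2) p r * latticeAdj (k+2) r q) := by
      intro p q r
      rw [hEfun r q]
      split_ifs with h1 h2
      · subst h1
        rw [latticeAdj_diag]
        ring
      · have : latticeAdj (k+2) r q = 1 := by simp only [latticeAdj, of_apply, if_pos h2]
        rw [this]; ring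
      · have : latticeAdj (k+2) r q = 0 := by simp only [latticeAdj, of_apply, if_neg h2]
        rw [this]; ring
    have hkey : ∀ p q : Fin (k+2) × Fin (k+2),
        (∑ r, latticeAdj (k+2) p r * E r q)
          = d * latticeAdj (k+2) p q
            + θ * (∑ r, latticeAdj (k+2) p r * latticeAdj (k+2) r q)
            + η * ((2 * ((k+2 : ℕ) : ℝ) - 2) - latticeAdj (k+2) p q
                   - ∑ r, latticeAdj (k+2) p r * latticeAdj (k+2) r q) := by
      intro p q
      have e1 : (∑ r : Fin (k+2) × Fin (k+2), if r = q then latticeAdj (k+2) p r else 0)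
          = latticeAdj (k+2) p q := by
        rw [Finset.sum_ite_eq' Finset.univ q (fun r => latticeAdj (k+2) p r)]
        simp
      calc (∑ r, latticeAdj (k+2) p r * E r q)
          = ∑ r, (d * (if r = q then latticeAdj (k+2) p r else 0)
              + θ * (latticeAdj (k+2) p r * latticeAdj (k+2) r q)
              + η * (latticeAdj (k+2) p r - (if r = q then latticeAdj (k+2) p r else 0)
                     - latticeAdj (k+2) p r * latticeAdj (k+2) r q)) := by
            exact Finset.sum_congr rfl fun r _ => hdecomp p q r
        _ = d * (∑ r : Fin (k+2) × Fin (k+2), if r = q then latticeAdj (k+2) p r else 0)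
              + θ * (∑ r, latticeAdj (k+2) p r * latticeAdj (k+2) r q)
              + η * ((∑ r, latticeAdj (k+2) p r)
                     - (∑ r : Fin (k+2) × Fin (k+2), if r = q then latticeAdj (k+2) p r else 0)
                     - ∑ r, latticeAdj (k+2) p r * latticeAdj (k+2) r q) := by
            rw [Finset.sum_add_distrib, Finset.sum_add_distrib, ← Finset.mul_sum, ← Finset.mul_sum,
              ← Finset.mul_sum, Finset.sum_sub_distrib, Finset.sum_sub_distrib]
        _ = _ := by rw [e1, degSum (k+2) (by omega) p]
    -- the eigenvalue equation entrywise
    have heig' : ∀ p q : Fin (k+2) × Fin (k+2),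
        (∑ r, latticeAdj (k+2) p r * E r q) = (((k+2 : ℕ) : ℝ) - 2) * E p q := by
      intro p q
      have := congrFun (congrFun heig p) q
      rw [Matrix.mul_apply, Matrix.smul_apply, smul_eq_mul] at this
      exact this
    have hAself : ∀ p : Fin (k+2) × Fin (k+2),
        (∑ r, latticeAdj (k+2) p r * latticeAdj (k+2) r p) = 2 * ((k+2 : ℕ) : ℝ) - 2 := by
      intro p
      have : ∀ r, latticeAdj (k+2) p r * latticeAdj (k+2) r p = latticeAdj (k+2) p r := by
        intro r
        have hsymA : latticeAdj (k+2) r p = latticeAdj (k+2) p r := by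
          simp only [latticeAdj, of_apply]
          apply if_congr _ rfl rfl
          constructor
          · rintro (⟨a, b⟩ | ⟨a, b⟩)
            · exact Or.inl ⟨a.symm, fun h => b h.symm⟩
            · exact Or.inr ⟨fun h => a h.symm, b.symm⟩
          · rintro (⟨a, b⟩ | ⟨a, b⟩)
            · exact Or.inl ⟨a.symm, fun h => b h.symm⟩
            · exact Or.inr ⟨fun h => a h.symm, b.symm⟩
        rw [hsymA]
        simp only [latticeAdj, of_apply]
        split_ifs <;> ring
      rw [Finset.sum_congr rfl fun r _ => this r, degSum (k+2) (by omega) p]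
    -- equation 1 : from diagonal entry
    have p00 : Fin (k+2) × Fin (k+2) := ((0 : Fin (k+2)), (0 : Fin (k+2)))
    have eq1 : (2 * ((k+2 : ℕ) : ℝ) - 2) * θ = (((k+2 : ℕ) : ℝ) - 2) * d := by
      have h := heig' ((0 : Fin (k+2)), (0 : Fin (k+2))) ((0 : Fin (k+2)), (0 : Fin (k+2)))
      rw [hkey, hAself, latticeAdj_diag, hd] at h
      linear_combination h
    -- equation 2 : adjacent pair
    have eq2 : d + (((k+2 : ℕ) : ℝ) - 1) * η = 0 := by
      have h := heig' ((0 : Fin (k+2)), (0 : Fin (k+2))) ((0 : Fin (k+2)), (1 : Fin (k+2)))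
      rw [hkey, commonAdj k] at h
      have hApq : latticeAdj (k+2) ((0 : Fin (k+2)), (0 : Fin (k+2))) ((0 : Fin (k+2)), (1 : Fin (k+2))) = 1 := by
        simp [latticeAdj, h01]
      have hEpq : E ((0 : Fin (k+2)), (0 : Fin (k+2))) ((0 : Fin (k+2)), (1 : Fin (k+2))) = θ := by
        rw [hEfun]
        simp [Prod.ext_iff, h01]
      rw [hApq, hEpq] at h
      have hNk : ((k+2 : ℕ) : ℝ) = (k:ℝ) + 2 := by push_cast; ring
      rw [hNk] at h ⊢
      linear_combination h
    -- equation 3 : non-adjacent pair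
    have eq3 : 2 * θ + (((k+2 : ℕ) : ℝ) - 2) * η = 0 := by
      have h := heig' ((0 : Fin (k+2)), (0 : Fin (k+2))) ((1 : Fin (k+2)), (1 : Fin (k+2)))
      rw [hkey, commonNon k] at h
      have hApq : latticeAdj (k+2) ((0 : Fin (k+2)), (0 : Fin (k+2))) ((1 : Fin (k+2)), (1 : Fin (k+2))) = 0 := by
        simp only [latticeAdj, of_apply]
        refine if_neg ?_
        rintro (⟨a, b⟩ | ⟨a, b⟩)
        · exact h01 a
        · exact h01 b
      have hEpq : E ((0 : Fin (k+2)), (0 : Fin (k+2))) ((1 : Fin (k+2)), (1 : Fin (k+2))) = η := by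
        rw [hEfun]
        rw [if_neg (by intro h'; exact h01 (congrArg Prod.fst h'))]
        rw [if_neg ?_]
        rintro (⟨a, b⟩ | ⟨a, b⟩)
        · exact h01 a
        · exact h01 b
      rw [hApq, hEpq] at h
      linear_combination h
    -- equation 4 : from idempotency at the diagonal
    have eq4 : d^2 + (2 * ((k+2 : ℕ) : ℝ) - 2) * θ^2 + (((k+2 : ℕ) : ℝ) - 1)^2 * η^2 = d := by
      have h := congrFun (congrFun hidem ((0 : Fin (k+2)), (0 : Fin (k+2)))) ((0 : Fin (k+2)), (0 : Fin (k+2)))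
      rw [Matrix.mul_apply, hd] at h
      set p := ((0 : Fin (k+2)), (0 : Fin (k+2))) with hp
      have hsq : ∀ r, E p r * E r p
          = d^2 * (if p = r then (1:ℝ) else 0) + θ^2 * latticeAdj (k+2) p r
            + η^2 * (1 - (if p = r then (1:ℝ) else 0) - latticeAdj (k+2) p r) := by
        intro r
        have hErp : E r p = E p r := by
          have := congrFun (congrFun hsym p) r
          rw [Matrix.transpose_apply] at this
          exact this
        rw [hErp, hEfun p r]
        split_ifs with h1 h2
        · subst h1
          rw [latticeAdj_diag]
          ring
        · have : latticeAdj (k+2) p r = 1 := by simp only [latticeAdj, of_apply, if_pos h2]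
          rw [this]; ring
        · have : latticeAdj (k+2) p r = 0 := by simp only [latticeAdj, of_apply, if_neg h2]
          rw [this]; ring
      rw [Finset.sum_congr rfl fun r _ => hsq r] at h
      rw [Finset.sum_add_distrib, Finset.sum_add_distrib, ← Finset.mul_sum, ← Finset.mul_sum,
        ← Finset.mul_sum, Finset.sum_sub_distrib, Finset.sum_sub_distrib] at h
      have e1 : (∑ r : Fin (k+2) × Fin (k+2), if p = r then (1:ℝ) else 0) = 1 := by
        rw [Finset.sum_ite_eq Finset.univ p (fun _ => (1:ℝ))]
        simp
      have e2 : (∑ _r : Fin (k+2) × Fin (k+2), (1:ℝ)) = ((k+2 : ℕ) : ℝ)^2 := by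
        rw [Finset.sum_const, Finset.card_univ, Fintype.card_prod, Fintype.card_fin]
        push_cast
        ring
      rw [e1, e2, degSum (k+2) (by omega) p] at h
      linear_combination h
    -- solve the system
    have hNge : (2:ℝ) ≤ ((k+2 : ℕ) : ℝ) := by exact_mod_cast Nat.le_of_eq rfl |>.trans (by omega)
    have hη0 : η ≠ 0 := by
      intro h0
      apply hE0
      have hθ0 : θ = 0 := by rw [h0] at eq3; linarith
      have hd0 : d = 0 := by rw [h0] at eq2; linarith
      ext i j
      rw [hEfun i j, hθ0, hd0, h0]
      simp only [Matrix.zero_apply]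
      split_ifs <;> rfl
    have hdval : d = -((((k+2 : ℕ) : ℝ) - 1)) * η := by linarith
    have hθval : θ = -((((k+2 : ℕ) : ℝ) - 2)) * η / 2 := by linarith
    rw [hdval, hθval] at eq4
    have hfac : (((k+2 : ℕ) : ℝ) - 1) * η * (((k+2 : ℕ) : ℝ)^2 * η + 2) = 0 := by linear_combination (2:ℝ) * eq4
    have hN1 : (((k+2 : ℕ) : ℝ) - 1) ≠ 0 := by linarith
    have e5 : ((k+2 : ℕ) : ℝ)^2 * η = -2 := by
      rcases mul_eq_zero.mp hfac with h | h
      · rcases mul_eq_zero.mp h with h' | h'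
        · exact absurd h' hN1
        · exact absurd h' hη0
      · linarith
    have hηv : ((k+2 : ℕ) : ℝ)^2 * η = -2 := e5
    have hdv : ((k+2 : ℕ) : ℝ)^2 * d = 2 * ((k+2 : ℕ) : ℝ) - 2 := by
      rw [hdval]; linear_combination (-((((k+2 : ℕ) : ℝ) - 1))) * e5
    have hθv : ((k+2 : ℕ) : ℝ)^2 * θ = ((k+2 : ℕ) : ℝ) - 2 := by
      rw [hθval]; linear_combination (-((((k+2 : ℕ) : ℝ) - 2)) / 2) * e5
    constructor
    · ext i j
      simp only [Matrix.smul_apply, Matrix.add_apply, Matrix.sub_apply, Matrix.one_apply,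
        Matrix.of_apply, smul_eq_mul]
      rw [hEfun i j]
      by_cases h1 : i = j
      · subst h1
        rw [if_pos rfl, if_pos rfl, latticeAdj_diag]
        linear_combination hdv
      · rw [if_neg h1, if_neg h1]
        by_cases h2 : (i.1 = j.1 ∧ i.2 ≠ j.2) ∨ (i.1 ≠ j.1 ∧ i.2 = j.2)
        · rw [if_pos h2]
          have : latticeAdj (k+2) i j = 1 := by simp only [latticeAdj, of_apply, if_pos h2]
          rw [this]
          linear_combination hθv
        · rw [if_neg h2]
          have : latticeAdj (k+2) i j = 0 := by simp only [latticeAdj, of_apply, if_neg h2]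
          rw [this]
          linear_combination hηv
    · -- m = 2 * (N - 1)
      have htr : E.trace = (m : ℝ) := by
        rw [trace_idem E hidem, hrank]
      have htr2 : E.trace = (((k+2 : ℕ) : ℝ)^2) * d / 1 := by
        rw [Matrix.trace]
        simp only [Matrix.diag]
        rw [Finset.sum_congr rfl fun p _ => hd p, Finset.sum_const, Finset.card_univ,
          Fintype.card_prod, Fintype.card_fin]
        push_cast
        ring
      have hm : (m : ℝ) = 2 * ((k+2 : ℕ) : ℝ) - 2 := by
        rw [← htr, htr2]
        linear_combination hdv / 1
      have hm2 : (m : ℝ) = ((2 * (k + 1) : ℕ) : ℝ) := by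
        rw [hm]
        push_cast
        ring
      have hm3 : m = 2 * (k + 1) := by exact_mod_cast hm2
      omega
end

section
/- Let W = GF(q)³ and let φ: W → W be a bijection such that for all distinct u,w ∈ W, ⟨w−u, φ(w)−φ(u)⟩ ≠ 0 and w ≠ u (i.e., {(w,φ(w)) : w ∈ W} is a clique in R₃ avoiding the spread S₀). Then for each α ∈ GF(q)∖{0}, the collection S_α = {{(w, αφ(w)+y) : w ∈ W} : y ∈ W} is a partition of W×W into q³ cliques of R₃ of size q³, and any clique of S_α and any clique of S_β with α ≠ β (or of S₀) intersect in at most one vertex. -/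
open Matrix

/-- Given a bijection `φ` of `W = GF(q)³` whose graph is a clique in the
distance-3 relation `R₃` avoiding the spread `S₀`, the family
`S_α = {{(w, αφ(w)+y) : w ∈ W} : y ∈ W}` (for `α ≠ 0`) is a partition of
`W × W` into `q³` cliques of `R₃` of size `q³`, and cliques from `S_α`, `S_β`
with `α ≠ β`, or from `S_α` and `S₀`, meet in at most one vertex. -/
theorem stmt_16 (q : ℕ) (F : Type*) [Field F] [Fintype F]
    (hq : Fintype.card F = q)
    (φ : (Fin 3 → F) → (Fin 3 → F)) (hbij : Function.Bijective φ)
    (hclique : ∀ u w : Fin 3 → F, u ≠ w → (w - u) ⬝ᵥ (φ w - φ u) ≠ 0) :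
    let R3 : ((Fin 3 → F) × (Fin 3 → F)) → ((Fin 3 → F) × (Fin 3 → F)) → Prop :=
      fun p r => p ≠ r ∧ (r.1 = p.1 ∨ (r.1 - p.1) ⬝ᵥ (r.2 - p.2) ≠ 0)
    let C : F → (Fin 3 → F) → Set ((Fin 3 → F) × (Fin 3 → F)) :=
      fun α y => {p | p.2 = α • φ p.1 + y}
    ∀ α : F, α ≠ 0 →
      (∀ p : (Fin 3 → F) × (Fin 3 → F), ∃! y : Fin 3 → F, p ∈ C α y) ∧
      (∀ y : Fin 3 → F, ∀ p ∈ C α y, ∀ r ∈ C α y, p ≠ r → R3 p r) ∧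
      (∀ y : Fin 3 → F, (C α y).ncard = q ^ 3) ∧
      (∀ β : F, β ≠ 0 → α ≠ β → ∀ y y' : Fin 3 → F,
        (C α y ∩ C β y').Subsingleton) ∧
      (∀ (y w : Fin 3 → F),
        (C α y ∩ {p : (Fin 3 → F) × (Fin 3 → F) | p.1 = w}).Subsingleton) := by
  intro R3 C α hα
  refine ⟨?_, ?_, ?_, ?_, ?_⟩
  · intro p
    refine ⟨p.2 - α • φ p.1, by simp [C], ?_⟩
    intro y hy
    simp only [C, Set.mem_setOf_eq] at hy
    rw [hy]; ring
  · intro y p hp r hr hpr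
    simp only [C, Set.mem_setOf_eq] at hp hr
    refine ⟨hpr, ?_⟩
    by_cases h1 : r.1 = p.1
    · exact Or.inl h1
    · refine Or.inr ?_
      have : r.2 - p.2 = α • (φ r.1 - φ p.1) := by
        rw [hp, hr, smul_sub]; abel
      rw [this, dotProduct_smul]
      simp only [smul_eq_mul]
      exact mul_ne_zero hα (hclique p.1 r.1 (fun h => h1 h.symm))
  · intro y
    have : C α y = Set.range (fun w : Fin 3 → F => (w, α • φ w + y)) := by
      ext p
      constructor
      · intro hp; exact ⟨p.1, by simp only [C, Set.mem_setOf_eq] at hp; exact Prod.ext rfl hp.symm⟩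
      · rintro ⟨w, rfl⟩; simp [C]
    have hinj : Function.Injective (fun w : Fin 3 → F => (w, α • φ w + y)) :=
      fun a b hab => congrArg Prod.fst hab
    rw [this, ← Nat.card_coe_set_eq, Nat.card_range_of_injective hinj, Nat.card_eq_fintype_card,
      Fintype.card_fun, hq, Fintype.card_fin]
  · intro β hβ hαβ y y' p hp r hr
    simp only [C, Set.mem_inter_iff, Set.mem_setOf_eq] at hp hr
    have h1 : (α - β) • φ p.1 = y' - y := by
      have := hp.1.symm.trans hp.2
      rw [sub_smul]
      linear_combination this
    have h2 : (α - β) • φ r.1 = y' - y := by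
      have := hr.1.symm.trans hr.2
      rw [sub_smul]
      linear_combination this
    have hab : α - β ≠ 0 := sub_ne_zero.mpr hαβ
    have hφ : φ p.1 = φ r.1 := by
      have := h1.trans h2.symm
      exact smul_right_injective _ hab this
    have h11 : p.1 = r.1 := hbij.injective hφ
    exact Prod.ext h11 (by rw [hp.1, hr.1, h11])
  · intro y w p hp r hr
    simp only [C, Set.mem_inter_iff, Set.mem_setOf_eq] at hp hr
    have h11 : p.1 = r.1 := hp.2.trans hr.2.symm
    exact Prod.ext h11 (by rw [hp.1, hr.1, h11])
end
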